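/- arXiv:2001.08685 — 10 statements merged into one kernel-verified Lean document; each statement's English description precedes it below -/
import Mathlib

section
/- Let I = {0, i₁, …, i_h} ⊆ {0,…,n-1} be a Moore exponent set for q and n, and for j = 1,…,h let σ_j : 𝔽_{q^n} → 𝔽_{q^n} be the automorphism x ↦ x^{q^{i_j}}. Then the intersection of the fixed fields ⋂_{j=1}^h Fix(σ_j) equals 𝔽_q. -/
/-- If `I = {0, i₁, …, i_h}` is a Moore exponent set for `q` and `n`, then the intersection
of the fixed fields of the automorphisms `x ↦ x^(q^(i_j))`, `j = 1, …, h`, equals `𝔽_q`. -/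
theorem stmt_3 (q n h : ℕ) (hq : IsPrimePow q) (hh : 2 ≤ h)
    (Fq F : Type*) [Field Fq] [Field F] [Algebra Fq F]
    [Fintype Fq] [Fintype F]
    (hcard_q : Fintype.card Fq = q) (hcard_F : Fintype.card F = q ^ n)
    (e : Fin h → ℕ) (he : ∀ j, e j < n)
    (hinj : Function.Injective (Fin.cons 0 e : Fin (h + 1) → ℕ))
    (hMoore : ∀ A : Fin (h + 1) → F,
      (Matrix.of fun r c => A r ^ q ^ (Fin.cons 0 e : Fin (h + 1) → ℕ) c :
          Matrix (Fin (h + 1)) (Fin (h + 1)) F).det = 0 ↔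
        ¬ LinearIndependent Fq A) :
    {x : F | ∀ j : Fin h, x ^ q ^ e j = x} = Set.range (algebraMap Fq F) := by
  have hq1 : 1 < q := hq.one_lt
  -- n bounds
  have hn0 : 0 < n := lt_of_le_of_lt (Nat.zero_le _) (he ⟨0, by omega⟩)
  have hle : h + 1 ≤ n := by
    have : Function.Injective (fun j : Fin (h+1) =>
        (⟨(Fin.cons 0 e : Fin (h+1) → ℕ) j, by
          refine Fin.cases ?_ ?_ j
          · simpa using hn0
          · intro i; simpa using he i⟩ : Fin n)) := by
      intro a b hab
      apply hinj
      simpa using congrArg Fin.val hab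
    simpa using Fintype.card_le_of_injective _ this
  -- finrank Fq F = n
  have hfr : Module.finrank Fq F = n := by
    have := Module.card_eq_pow_finrank (K := Fq) (V := F)
    rw [hcard_q, hcard_F] at this
    exact Nat.pow_right_injective hq1 this.symm
  ext x
  simp only [Set.mem_setOf_eq, Set.mem_range]
  constructor
  · intro hx
    by_contra hxr
    -- 1 and x are linearly independent over Fq
    have hpair : LinearIndependent Fq ![(1 : F), x] := by
      rw [LinearIndependent.pair_iff' one_ne_zero]
      intro a ha
      exact hxr ⟨a, by simpa [Algebra.algebraMap_eq_smul_one] using ha⟩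
    -- extend to a linearly independent family of size h+1, keeping first two entries
    have key : ∀ k : ℕ, k + 2 ≤ n → ∃ v : Fin (k + 2) → F,
        LinearIndependent Fq v ∧ v 0 = 1 ∧ v 1 = x := by
      intro k
      induction k with
      | zero => intro _; exact ⟨![(1 : F), x], hpair, rfl, rfl⟩
      | succ m ih =>
        intro hk
        obtain ⟨v, hv, hv0, hv1⟩ := ih (by omega)
        obtain ⟨y, hy⟩ := exists_linearIndependent_snoc_of_lt_finrank hv (by omega)
        refine ⟨Fin.snoc v y, hy, ?_, ?_⟩
        · rw [show (0 : Fin (m+1+2)) = Fin.castSucc 0 by rfl, Fin.snoc_castSucc]; exact hv0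
        · rw [show (1 : Fin (m+1+2)) = Fin.castSucc 1 by rfl, Fin.snoc_castSucc]; exact hv1
    obtain ⟨v, hv, hv0, hv1⟩ := key (h - 1) (by omega)
    have hcast : h - 1 + 2 = h + 1 := by omega
    set A : Fin (h + 1) → F := v ∘ Fin.cast hcast.symm with hA
    have hAind : LinearIndependent Fq A :=
      hv.comp _ (fun a b hab => by simpa [Fin.ext_iff] using congrArg Fin.val hab)
    have hA0 : A 0 = 1 := by
      have : (Fin.cast hcast.symm (0 : Fin (h+1))) = (0 : Fin (h-1+2)) := rfl
      simp [hA, this, hv0]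
    have hA1 : A 1 = x := by
      have : (Fin.cast hcast.symm (1 : Fin (h+1))) = (1 : Fin (h-1+2)) := by
        apply Fin.ext; simp [Fin.val_one, Nat.mod_eq_of_lt]; omega
      simp [hA, this, hv1]
    -- the Moore matrix of A has det 0: rows 0 and 1 are (1,…,1) and (x,…,x)
    set M : Matrix (Fin (h+1)) (Fin (h+1)) F :=
      Matrix.of fun r c => A r ^ q ^ (Fin.cons 0 e : Fin (h+1) → ℕ) c with hM
    have hrow0 : ∀ c, M 0 c = 1 := by intro c; simp [hM, hA0]
    have hrow1 : ∀ c, M 1 c = x := by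
      intro c
      refine Fin.cases ?_ ?_ c
      · simp [hM, hA1]
      · intro i; simp [hM, hA1, hx i]
    have hdet : M.det = 0 := by
      have h01 : (1 : Fin (h+1)) ≠ 0 := by
        simp [Fin.ext_iff]; omega
      rw [← Matrix.det_updateRow_add_smul_self M h01 (-x)]
      apply Matrix.det_eq_zero_of_row_eq_zero 1
      intro c
      simp [Matrix.updateRow_self, hrow0, hrow1]
    exact (hMoore A).mp hdet hAind
  · rintro ⟨a, rfl⟩ j
    rw [← map_pow]
    congr 1
    calc a ^ q ^ e j = a ^ (Fintype.card Fq) ^ e j := by rw [hcard_q]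
    _ = a := FiniteField.pow_card_pow _ _
end

section
/- Let I = {0, i₁, i₂} be a Moore exponent set for q and n, with σ_j : x ↦ x^{q^{i_j}}. Then Fix(σ₁) = 𝔽_q or Fix(σ₂) = 𝔽_q, i.e. gcd(i₁, n) = 1 or gcd(i₂, n) = 1. -/
/-!
If `gcd(i, n) = g`, the fixed space of `σ_i : x ↦ x^{q^i}` contains a copy of `𝔽_{q^g}`, so
it has `𝔽_q`-dimension at least `g`. For `g ≥ 3`, three independent vectors fixed by `σ_i` give a
Moore matrix with two equal columns. If `gcd(i₁, n) = gcd(i₂, n) = 2`, two independent elements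
`a, b` of `𝔽_{q²}` are fixed by every `σ_j`, so their rows in the Moore matrix are constant, hence
proportional; adding any `v` not fixed by `σ_{i₁}` (it exists since `0 < i₁ < n`) keeps the
family independent.
-/

open Module

namespace FiniteField

variable (K L : Type*) [Field K] [Fintype K] [Field L] [Algebra K L]

def frobeniusPowFixed (m : ℕ) : Submodule K L :=
  LinearMap.eqLocus (frobeniusAlgHom K L ^ m).toLinearMap LinearMap.id

variable {K L}

theorem mem_frobeniusPowFixed {m : ℕ} {x : L} :
    x ∈ frobeniusPowFixed K L m ↔ x ^ Fintype.card K ^ m = x := by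
  simp [frobeniusPowFixed, LinearMap.mem_eqLocus, AlgHom.coe_pow, coe_frobeniusAlgHom,
    pow_iterate]

theorem frobeniusPowFixed_mono {d m : ℕ} (h : d ∣ m) :
    frobeniusPowFixed K L d ≤ frobeniusPowFixed K L m := by
  obtain ⟨t, rfl⟩ := h
  intro x hx
  have hfix : Function.IsFixedPt (· ^ Fintype.card K ^ d) x := mem_frobeniusPowFixed.mp hx
  simpa only [mem_frobeniusPowFixed, pow_mul, pow_iterate, Function.IsFixedPt] using hfix.iterate t

theorem frobeniusPowFixed_ne_top [Finite L] {m : ℕ} (hm0 : m ≠ 0) (hm : m < finrank K L) :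
    frobeniusPowFixed K L m ≠ ⊤ := by
  intro htop
  refine pow_ne_one_of_lt_orderOf hm0 ((orderOf_frobeniusAlgHom K L).symm ▸ hm) ?_
  ext x
  exact LinearMap.mem_eqLocus.mp (htop ▸ Submodule.mem_top : x ∈ frobeniusPowFixed K L m)

theorem le_finrank_frobeniusPowFixed [Finite L] {d : ℕ} (hd0 : d ≠ 0) (hd : d ∣ finrank K L) :
    d ≤ finrank K (frobeniusPowFixed K L d) := by
  obtain ⟨p, _⟩ := CharP.exists K
  have : Fact p.Prime := ⟨CharP.char_is_prime K p⟩
  have : NeZero d := ⟨hd0⟩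
  let E := Extension K p d
  have : Fintype E := .ofFinite E
  obtain ⟨f⟩ := nonempty_algHom_of_finrank_dvd (F := K) (K := E) (L := L)
    (by rwa [finrank_extension])
  have hrange : LinearMap.range f.toLinearMap ≤ frobeniusPowFixed K L d := by
    rintro _ ⟨y, rfl⟩
    have hy : y ^ Fintype.card K ^ d = y := by
      rw [← Nat.card_eq_fintype_card, ← natCard_extension K p d]
      exact Nat.card_eq_fintype_card (α := E) ▸ FiniteField.pow_card y
    rw [mem_frobeniusPowFixed, AlgHom.toLinearMap_apply, ← map_pow, hy]
  calc d = finrank K E := (finrank_extension K p d).symm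
    _ = finrank K (LinearMap.range f.toLinearMap) :=
      (LinearMap.finrank_range_of_inj f.injective).symm
    _ ≤ finrank K (frobeniusPowFixed K L d) := Submodule.finrank_mono hrange

theorem gcd_le_finrank_frobeniusPowFixed [Finite L] (m : ℕ) :
    Nat.gcd m (finrank K L) ≤ finrank K (frobeniusPowFixed K L m) :=
  (le_finrank_frobeniusPowFixed (Nat.gcd_ne_zero_right finrank_pos.ne')
    (Nat.gcd_dvd_right _ _)).trans
    (Submodule.finrank_mono (frobeniusPowFixed_mono (Nat.gcd_dvd_left _ _)))

end FiniteField

theorem Submodule.exists_linearIndependent_of_le_finrank {K V : Type*} [Field K] [AddCommGroup V]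
    [Module K V] {W : Submodule K V} {k : ℕ} (h : k ≤ finrank K W) :
    ∃ A : Fin k → V, LinearIndependent K A ∧ ∀ i, A i ∈ W :=
  have ⟨B, hB⟩ := _root_.exists_linearIndependent_of_le_finrank h
  ⟨W.subtype ∘ B, hB.map' _ W.ker_subtype, fun i => (B i).2⟩

theorem Matrix.det_eq_zero_of_row_eq_smul {n R : Type*} [Fintype n] [DecidableEq n] [CommRing R]
    {M : Matrix n n R} {i j : n} (hij : i ≠ j) (c : R) (h : M j = c • M i) : M.det = 0 :=
  calc M.det = (M.updateRow j (c • M i)).det := by rw [← h, Matrix.updateRow_eq_self]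
    _ = c * (M.updateRow j (M i)).det := Matrix.det_updateRow_smul _ _ _ _
    _ = 0 := by
      rw [Matrix.det_zero_of_row_eq hij (by rw [Matrix.updateRow_self, Matrix.updateRow_ne hij]),
        mul_zero]

section Moore

open FiniteField

variable {K L : Type*} [Field K] [Fintype K] [Field L] [Algebra K L]

def mooreMatrix {R : Type*} [CommRing R] {k : ℕ} (q : ℕ) (e : Fin k → ℕ) (A : Fin k → R) :
    Matrix (Fin k) (Fin k) R :=
  Matrix.of fun r c => A r ^ q ^ e c

variable (K L) in
def IsMooreExponentSet {k : ℕ} (e : Fin k → ℕ) : Prop :=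
  ∀ A : Fin k → L, (mooreMatrix (Fintype.card K) e A).det = 0 ↔ ¬ LinearIndependent K A

namespace IsMooreExponentSet

variable [Finite L]

theorem gcd_finrank_lt {k : ℕ} {e : Fin k → ℕ} (h : IsMooreExponentSet K L e) {c c' : Fin k}
    (hcc' : c ≠ c') (hc : e c = 0) : Nat.gcd (e c') (finrank K L) < k := by
  by_contra! hk
  obtain ⟨A, hA, hAW⟩ := Submodule.exists_linearIndependent_of_le_finrank
    (hk.trans (gcd_le_finrank_frobeniusPowFixed (K := K) (L := L) (e c')))
  refine (h A).mp (Matrix.det_zero_of_column_eq hcc' fun r => ?_) hA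
  simp [mooreMatrix, hc, mem_frobeniusPowFixed.mp (hAW r)]

theorem not_forall_dvd {e : Fin 3 → ℕ} (h : IsMooreExponentSet K L e) {d : ℕ} (hd : 2 ≤ d)
    (hdn : d ∣ finrank K L) {c : Fin 3} (hc0 : e c ≠ 0) (hcn : e c < finrank K L) :
    ¬ ∀ c, d ∣ e c := by
  intro he
  obtain ⟨B, hB, hBW⟩ := Submodule.exists_linearIndependent_of_le_finrank
    (hd.trans (le_finrank_frobeniusPowFixed (K := K) (L := L) (by omega) hdn))
  obtain ⟨v, -, hv⟩ := SetLike.exists_of_lt (frobeniusPowFixed_ne_top hc0 hcn).lt_top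
  have hspan : v ∉ Submodule.span K (Set.range B) := fun hmem => hv <|
    frobeniusPowFixed_mono (he c) (Submodule.span_le.mpr (Set.range_subset_iff.mpr hBW) hmem)
  have hrow (j : Fin 2) (c : Fin 3) : B j ^ Fintype.card K ^ e c = B j :=
    mem_frobeniusPowFixed.mp (frobeniusPowFixed_mono (he c) (hBW j))
  refine (h (Fin.cons v B)).mp ?_ (hB.finCons hspan)
  refine Matrix.det_eq_zero_of_row_eq_smul (i := 1) (j := 2) (by decide) (B 1 / B 0) ?_
  ext c
  change B 1 ^ _ = B 1 / B 0 * B 0 ^ _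
  rw [hrow, hrow, div_mul_cancel₀ _ (hB.ne_zero 0)]

end IsMooreExponentSet

end Moore

theorem stmt_4_general (q n i₁ i₂ : ℕ)
    (hi₁ : 0 < i₁) (hi₁n : i₁ < n)
    (Fq F : Type*) [Field Fq] [Field F] [Algebra Fq F]
    [Fintype Fq] [Fintype F]
    (hcard_q : Fintype.card Fq = q) (hcard_F : Fintype.card F = q ^ n)
    (hMoore : ∀ A : Fin 3 → F,
      (Matrix.of fun r c => A r ^ q ^ (![0, i₁, i₂] c) : Matrix (Fin 3) (Fin 3) F).det = 0 ↔
        ¬ LinearIndependent Fq A) :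
    Nat.gcd i₁ n = 1 ∨ Nat.gcd i₂ n = 1 := by
  subst hcard_q
  obtain rfl : finrank Fq F = n := Nat.pow_right_injective Fintype.one_lt_card
    (Module.card_eq_pow_finrank.symm.trans hcard_F)
  have hM : IsMooreExponentSet Fq F ![0, i₁, i₂] := hMoore
  have h₁ : Nat.gcd i₁ (finrank Fq F) < 3 :=
    hM.gcd_finrank_lt (c := 0) (c' := 1) (by decide) rfl
  have h₂ : Nat.gcd i₂ (finrank Fq F) < 3 :=
    hM.gcd_finrank_lt (c := 0) (c' := 2) (by decide) rfl
  have hpos (i : ℕ) : 0 < Nat.gcd i (finrank Fq F) :=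
    Nat.gcd_pos_of_pos_right _ (hi₁.trans hi₁n)
  by_contra! hgcd
  have hg₁ : Nat.gcd i₁ (finrank Fq F) = 2 := by grind [hpos i₁]
  have hg₂ : Nat.gcd i₂ (finrank Fq F) = 2 := by grind [hpos i₂]
  refine hM.not_forall_dvd le_rfl (hg₁ ▸ Nat.gcd_dvd_right _ _) (c := 1) hi₁.ne' hi₁n ?_
  intro c
  fin_cases c
  exacts [dvd_zero 2, hg₁ ▸ Nat.gcd_dvd_left _ _, hg₂ ▸ Nat.gcd_dvd_left _ _]

/-- If `I = {0, i₁, i₂}` is a Moore exponent set for `q` and `n`, then `Fix(σ₁) = 𝔽_q` or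
`Fix(σ₂) = 𝔽_q`, i.e. `gcd(i₁, n) = 1` or `gcd(i₂, n) = 1`. -/
theorem stmt_4 (q n i₁ i₂ : ℕ) (hq : IsPrimePow q)
    (hi₁ : 0 < i₁) (hi₁n : i₁ < n) (hi₂ : 0 < i₂) (hi₂n : i₂ < n) (hne : i₁ ≠ i₂)
    (Fq F : Type*) [Field Fq] [Field F] [Algebra Fq F]
    [Fintype Fq] [Fintype F]
    (hcard_q : Fintype.card Fq = q) (hcard_F : Fintype.card F = q ^ n)
    (hMoore : ∀ A : Fin 3 → F,
      (Matrix.of fun r c => A r ^ q ^ (![0, i₁, i₂] c) : Matrix (Fin 3) (Fin 3) F).det = 0 ↔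
        ¬ LinearIndependent Fq A) :
    Nat.gcd i₁ n = 1 ∨ Nat.gcd i₂ n = 1 :=
  stmt_4_general q n i₁ i₂ hi₁ hi₁n Fq F hcard_q hcard_F hMoore
end

section
/- (Blokhuis–Lavrauw bound) A scattered 𝔽_q-linear set of PG(r-1, q^n) has rank at most rn/2. Equivalently, if U is an 𝔽_q-subspace of an r-dimensional 𝔽_{q^n}-vector space V such that dim_{𝔽_q}(U ∩ ⟨v⟩_{𝔽_{q^n}}) ≤ 1 for every nonzero v ∈ V, then dim_{𝔽_q} U ≤ rn/2. -/
/-!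
Pick `c ∈ K` outside `F`. Then `U` and `c • U` are `F`-subspaces of `V` of the same dimension,
and they meet trivially: a nonzero `c • u` in `U` would give two `F`-independent vectors `u`,
`c • u` of `U` on the `K`-line through `u`. Hence `2 dim_F U ≤ dim_F V = rn`.
-/

open Module Submodule

namespace Submodule

variable {F : Type*} (K : Type*) {V : Type*} [Field F] [Field K] [Algebra F K]
  [AddCommGroup V] [Module K V] [Module F V] [IsScalarTower F K V]

def IsScattered (U : Submodule F V) : Prop :=
  ∀ v : V, v ≠ 0 → finrank F ↥(U ⊓ (span K {v}).restrictScalars F) ≤ 1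

variable {K} [FiniteDimensional F V] {U : Submodule F V}

theorem IsScattered.mem_range_algebraMap (hU : U.IsScattered K) {u : V} (hu : u ∈ U)
    (hu0 : u ≠ 0) {c : K} (hcu : c • u ∈ U) : c ∈ Set.range (algebraMap F K) := by
  by_contra hc
  have hindep : LinearIndependent F ![u, c • u] := by
    refine (LinearIndependent.pair_iff' hu0).2 fun a ha => hc ⟨a, ?_⟩
    rw [← algebraMap_smul K a u] at ha
    exact smul_left_injective K hu0 ha
  have hle : span F (Set.range ![u, c • u]) ≤ U ⊓ (span K {u}).restrictScalars F := by
    rw [span_le, Set.range_subset_iff, Fin.forall_fin_two]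
    exact ⟨⟨hu, mem_span_singleton_self u⟩, ⟨hcu, smul_mem _ c (mem_span_singleton_self u)⟩⟩
  have := (finrank_span_eq_card hindep).symm.trans_le ((finrank_mono hle).trans (hU u hu0))
  simp at this

theorem IsScattered.inf_map_smul_eq_bot (hU : U.IsScattered K) {c : K}
    (hc : c ∉ Set.range (algebraMap F K)) (hc0 : c ≠ 0) :
    U ⊓ U.map ((LinearEquiv.smulOfNeZero K V c hc0).restrictScalars F).toLinearMap = ⊥ := by
  rw [eq_bot_iff]
  rintro _ ⟨hwU, u, huU, rfl⟩
  rw [mem_bot]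
  by_contra hcu0
  have hu0 : u ≠ 0 := by
    rintro rfl
    simp at hcu0
  exact hc (hU.mem_range_algebraMap huU hu0 hwU)

theorem IsScattered.two_mul_finrank_le (hU : U.IsScattered K) {c : K}
    (hc : c ∉ Set.range (algebraMap F K)) : 2 * finrank F U ≤ finrank F V := by
  have hc0 : c ≠ 0 := fun h => hc ⟨0, by rw [h, map_zero]⟩
  set cU := U.map ((LinearEquiv.smulOfNeZero K V c hc0).restrictScalars F).toLinearMap
  have h1 := finrank_sup_add_finrank_inf_eq U cU
  rw [hU.inf_map_smul_eq_bot hc hc0, finrank_bot, LinearEquiv.finrank_map_eq] at h1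
  have := finrank_le (U ⊔ cU)
  omega

end Submodule

theorem stmt_7_general (q n : ℕ) (hn : 2 ≤ n)
    (Fq K V : Type*) [Field Fq] [Field K] [Algebra Fq K]
    [Fintype Fq] [Fintype K]
    (hcard_q : Fintype.card Fq = q) (hcard_K : Fintype.card K = q ^ n)
    [AddCommGroup V] [Module K V] [Module Fq V] [IsScalarTower Fq K V]
    [FiniteDimensional K V]
    (U : Submodule Fq V)
    (hscat : ∀ v : V, v ≠ 0 →
      Module.finrank Fq ↥(U ⊓ (Submodule.span K {v}).restrictScalars Fq) ≤ 1) :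
    2 * Module.finrank Fq U ≤ Module.finrank K V * n := by
  have hq : 1 < q := hcard_q ▸ Fintype.one_lt_card
  have hFK : finrank Fq K = n := by
    refine Nat.pow_right_injective hq (show q ^ _ = q ^ n from ?_)
    rw [← hcard_K, ← hcard_q, card_eq_pow_finrank (K := Fq) (V := K)]
  obtain ⟨c, hc⟩ : ∃ c : K, c ∉ Set.range (algebraMap Fq K) := by
    by_contra! h
    have hbot : (⊥ : Subalgebra Fq K) = ⊤ := Algebra.eq_top_iff.2 fun x => Algebra.mem_bot.2 (h x)
    rw [Subalgebra.bot_eq_top_iff_finrank_eq_one] at hbot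
    omega
  have : FiniteDimensional Fq V := .trans Fq K V
  rw [← hFK, mul_comm (finrank K V), finrank_mul_finrank]
  exact IsScattered.two_mul_finrank_le hscat hc

/-- (Blokhuis–Lavrauw bound) If `U` is a scattered `𝔽_q`-subspace of an `r`-dimensional
`𝔽_{q^n}`-vector space `V`, then `dim_{𝔽_q} U ≤ rn/2`. -/
theorem stmt_7 (q n : ℕ) (hq : IsPrimePow q) (hn : 2 ≤ n)
    (Fq K V : Type*) [Field Fq] [Field K] [Algebra Fq K]
    [Fintype Fq] [Fintype K]
    (hcard_q : Fintype.card Fq = q) (hcard_K : Fintype.card K = q ^ n)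
    [AddCommGroup V] [Module K V] [Module Fq V] [IsScalarTower Fq K V]
    [FiniteDimensional K V]
    (U : Submodule Fq V)
    (hscat : ∀ v : V, v ≠ 0 →
      Module.finrank Fq ↥(U ⊓ (Submodule.span K {v}).restrictScalars Fq) ≤ 1) :
    2 * Module.finrank Fq U ≤ Module.finrank K V * n :=
  stmt_7_general q n hn Fq K V hcard_q hcard_K U hscat
end

section
/- If L_U is an h-scattered 𝔽_q-linear set of rank k in PG(r-1, q^n), then either k = r (and L_U is a subgeometry PG(r-1, q)), or k ≤ rn/(h+1). -/
open Module Submodule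

/-- If `L_U` is an `h`-scattered `𝔽_q`-linear set of rank `k` in `PG(r-1, q^n)`, then either
`k = r` (and `L_U` is a subgeometry) or `k ≤ rn/(h+1)`. -/
theorem stmt_8 (q n h k r : ℕ) (hq : IsPrimePow q) (hh : 1 ≤ h) (hhr : h ≤ r)
    (Fq K V : Type*) [Field Fq] [Field K] [Algebra Fq K]
    [Fintype Fq] [Fintype K]
    (hcard_q : Fintype.card Fq = q) (hcard_K : Fintype.card K = q ^ n)
    [AddCommGroup V] [Module K V] [Module Fq V] [IsScalarTower Fq K V]
    [FiniteDimensional K V]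
    (hr : Module.finrank K V = r)
    (U : Submodule Fq V) (hk : Module.finrank Fq U = k)
    (hspan : Submodule.span K (U : Set V) = ⊤)
    (hscat : ∀ W : Submodule K V, Module.finrank K W = h →
      Module.finrank Fq ↥(U ⊓ W.restrictScalars Fq) ≤ h) :
    k = r ∨ (h + 1) * k ≤ r * n := by
  classical
  have hq2 : 2 ≤ q := hq.two_le
  haveI : FiniteDimensional Fq K := Module.finite_iff_finite.mpr inferInstance
  haveI : FiniteDimensional Fq V := FiniteDimensional.trans Fq K V
  -- the degree of K over Fq is n
  have hfinK : Module.finrank Fq K = n := by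
    apply Nat.pow_right_injective hq2
    have hcard' : Fintype.card K = Fintype.card Fq ^ Module.finrank Fq K :=
      card_eq_pow_finrank
    rw [hcard_q] at hcard'
    show q ^ Module.finrank Fq K = q ^ n
    rw [← hcard', hcard_K]
  have hn1 : 1 ≤ n := by
    rcases Nat.eq_zero_or_pos n with h0 | h1
    · exfalso
      have h2 := Fintype.one_lt_card (α := K)
      rw [hcard_K, h0, pow_zero] at h2
      omega
    · exact h1
  have hdimV : Module.finrank Fq V = n * r := by
    rw [← Module.finrank_mul_finrank Fq K V, hfinK, hr]
  -- an Fq-basis of U, viewed in V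
  let b := Module.finBasisOfFinrankEq Fq U hk
  let u : Fin k → V := fun j => (b j : V)
  have hu_mem : ∀ j, u j ∈ U := fun j => (b j).2
  have hu_li : LinearIndependent Fq u := b.linearIndependent.map' U.subtype (ker_subtype U)
  have hspanU : Submodule.span Fq (Set.range u) = U := by
    have hru : Set.range u = U.subtype '' Set.range b := by
      rw [← Set.range_comp]; rfl
    rw [hru, ← Submodule.map_span, b.span_eq, Submodule.map_top, Submodule.range_subtype]
  -- r ≤ k
  have hu_spanK : Submodule.span K (Set.range u) = ⊤ := by
    rw [← top_le_iff, ← hspan, Submodule.span_le]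
    intro x hx
    have hx' : x ∈ Submodule.span Fq (Set.range u) := by rw [hspanU]; exact hx
    exact Submodule.span_le_restrictScalars Fq K (Set.range u) hx'
  have hkr : r ≤ k := by
    have h1 : Module.finrank K (Submodule.span K (Set.range u)) ≤
        (Set.range u).toFinset.card := finrank_span_le_card _
    rw [hu_spanK, finrank_top] at h1
    have h2 : (Set.range u).toFinset.card ≤ k := by
      rw [Set.toFinset_range]
      exact (Finset.card_image_le).trans (by simp)
    rw [hr] at h1
    omega
  -- every K-subspace of dimension < r misses some vector of U
  have hUne : ∀ W' : Submodule K V, Module.finrank K W' < r → ∃ x ∈ U, x ∉ W' := by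
    intro W' hW'
    by_contra hcon
    push_neg at hcon
    have hle : Submodule.span K (U : Set V) ≤ W' := Submodule.span_le.mpr hcon
    rw [hspan, top_le_iff] at hle
    rw [hle, finrank_top, hr] at hW'
    omega
  -- extension lemma: a K-subspace of dim ≤ h can be extended to dim exactly (dim + j)
  -- gaining at least j in the Fq-dimension of its intersection with U
  have ext : ∀ (j : ℕ) (W' : Submodule K V), Module.finrank K W' + j ≤ h →
      ∃ W : Submodule K V, Module.finrank K W = Module.finrank K W' + j ∧
        Module.finrank Fq ↥(U ⊓ W'.restrictScalars Fq) + j ≤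
          Module.finrank Fq ↥(U ⊓ W.restrictScalars Fq) := by
    intro j
    induction j with
    | zero => intro W' _; exact ⟨W', by simp, by simp⟩
    | succ j ih =>
      intro W' hW'
      have hlt : Module.finrank K W' < r := by omega
      obtain ⟨x, hxU, hxW⟩ := hUne W' hlt
      have hx0 : x ≠ 0 := fun h0 => hxW (h0 ▸ W'.zero_mem)
      have hinf : W' ⊓ (K ∙ x) = ⊥ := by
        rw [eq_bot_iff]
        intro y hy
        obtain ⟨hy1, hy2⟩ := Submodule.mem_inf.mp hy
        obtain ⟨a, rfl⟩ := Submodule.mem_span_singleton.mp hy2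
        by_cases ha : a = 0
        · simp [ha]
        · exfalso
          apply hxW
          have := W'.smul_mem a⁻¹ hy1
          rwa [smul_smul, inv_mul_cancel₀ ha, one_smul] at this
      have hdim'' : Module.finrank K ↥(W' ⊔ (K ∙ x)) = Module.finrank K W' + 1 := by
        have hsum := Submodule.finrank_sup_add_finrank_inf_eq W' (K ∙ x)
        rw [hinf, finrank_bot, finrank_span_singleton hx0] at hsum
        omega
      have hmono : (U ⊓ W'.restrictScalars Fq) < (U ⊓ (W' ⊔ (K ∙ x)).restrictScalars Fq) := by
        rw [SetLike.lt_iff_le_and_exists]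
        refine ⟨inf_le_inf_left U (fun y hy => (le_sup_left : W' ≤ W' ⊔ (K ∙ x)) hy), x, ?_, ?_⟩
        · exact Submodule.mem_inf.mpr ⟨hxU,
            (le_sup_right : (K ∙ x) ≤ W' ⊔ (K ∙ x)) (Submodule.mem_span_singleton_self x)⟩
        · intro hmem
          exact hxW (Submodule.mem_inf.mp hmem).2
      have hstep := Submodule.finrank_lt_finrank_of_lt hmono
      obtain ⟨W, hWdim, hWle⟩ := ih (W' ⊔ (K ∙ x)) (by omega)
      exact ⟨W, by omega, by omega⟩
  -- key lemma: at most h+1 Fq-independent vectors of U are K-independent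
  have key : ∀ (t : ℕ) (x : Fin t → V), t ≤ h + 1 → (∀ i, x i ∈ U) →
      LinearIndependent Fq x → LinearIndependent K x := by
    intro t x ht hxU hli
    by_contra hdep
    have he_le : Module.finrank K (Submodule.span K (Set.range x)) ≤ t := by
      refine (finrank_span_le_card _).trans ?_
      rw [Set.toFinset_range]
      exact (Finset.card_image_le).trans (by simp)
    have he_ne : Module.finrank K (Submodule.span K (Set.range x)) ≠ t := by
      intro he
      apply hdep
      rw [linearIndependent_iff_card_eq_finrank_span]
      simp only [Set.finrank, Fintype.card_fin]
      omega
    have he_lt : Module.finrank K (Submodule.span K (Set.range x)) < t :=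
      lt_of_le_of_ne he_le he_ne
    obtain ⟨W, hWdim, hWle⟩ :=
      ext (h - Module.finrank K (Submodule.span K (Set.range x)))
        (Submodule.span K (Set.range x)) (by omega)
    have hWh : Module.finrank K W = h := by omega
    have hrank1 : t ≤ Module.finrank Fq
        ↥(U ⊓ (Submodule.span K (Set.range x)).restrictScalars Fq) := by
      have hsub : Submodule.span Fq (Set.range x) ≤
          (U ⊓ (Submodule.span K (Set.range x)).restrictScalars Fq) := by
        rw [Submodule.span_le]
        rintro y ⟨i, rfl⟩
        exact Submodule.mem_inf.mpr ⟨hxU i, Submodule.subset_span ⟨i, rfl⟩⟩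
      have h1 : Module.finrank Fq (Submodule.span Fq (Set.range x)) = t := by
        rw [finrank_span_eq_card hli, Fintype.card_fin]
      calc t = Module.finrank Fq (Submodule.span Fq (Set.range x)) := h1.symm
        _ ≤ _ := Submodule.finrank_mono hsub
    have hcontra := hscat W hWh
    omega
  -- choose t := min (h+1) n many Fq-independent scalars in K
  set t := min (h + 1) n with htdef
  let bK := Module.finBasisOfFinrankEq Fq K hfinK
  let lam : Fin t → K := fun i => bK (Fin.castLE (min_le_right (h + 1) n) i)
  have hlam_li : LinearIndependent Fq lam :=
    bK.linearIndependent.comp _ (Fin.castLE_injective _)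
  -- the family (lam i • u j) is Fq-linearly independent
  have hg : LinearIndependent Fq (fun p : Fin t × Fin k => lam p.1 • u p.2) := by
    rw [Fintype.linearIndependent_iff]
    intro c hc
    -- collapse the inner sums into elements of U
    have hc' : ∑ i : Fin t, lam i • ((∑ j, c (i, j) • b j : U) : V) = 0 := by
      rw [← hc, Fintype.sum_prod_type]
      apply Finset.sum_congr rfl
      intro i _
      have hwv : ((∑ j, c (i, j) • b j : U) : V) = ∑ j, c (i, j) • u j := by
        simp [u]
      rw [hwv, Finset.smul_sum]
      apply Finset.sum_congr rfl
      intro j _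
      rw [smul_comm]
    set w : Fin t → U := fun i => ∑ j, c (i, j) • b j with hwdef
    -- the span of the w's inside U
    set S := Submodule.span Fq (Set.range (fun i => (w i : V))) with hSdef
    have hSle : S ≤ U := Submodule.span_le.mpr (by rintro y ⟨i, rfl⟩; exact (w i).2)
    have hd_le : Module.finrank Fq S ≤ t := by
      refine (finrank_span_le_card _).trans ?_
      rw [Set.toFinset_range]
      exact (Finset.card_image_le).trans (by simp)
    let v := Module.finBasis Fq ↥S
    have hvV_li : LinearIndependent Fq (fun l => ((v l : V) : V)) :=
      v.linearIndependent.map' S.subtype (ker_subtype S)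
    have hvU : ∀ l, (v l : V) ∈ U := fun l => hSle (v l).2
    have hvK : LinearIndependent K (fun l => ((v l : V) : V)) :=
      key _ _ (by omega) hvU hvV_li
    -- coordinates of the w's in the basis v
    let wS : Fin t → ↥S := fun i => ⟨(w i : V), Submodule.subset_span ⟨i, rfl⟩⟩
    let a : Fin t → Fin (Module.finrank Fq ↥S) → Fq := fun i l => v.repr (wS i) l
    have hwrepr : ∀ i, ((w i : V) : V) = ∑ l, a i l • (v l : V) := by
      intro i
      have := v.sum_repr (wS i)
      have hcoe := congrArg (Submodule.subtype S) this
      simp only [map_sum, map_smul] at hcoe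
      exact hcoe.symm
    have hsum2 : ∑ l, (∑ i, a i l • lam i) • ((v l : V) : V) = 0 := by
      calc ∑ l, (∑ i, a i l • lam i) • ((v l : V) : V)
          = ∑ l, ∑ i, (a i l • lam i) • ((v l : V) : V) := by
            simp_rw [Finset.sum_smul]
        _ = ∑ i, ∑ l, (a i l • lam i) • ((v l : V) : V) := Finset.sum_comm
        _ = ∑ i, ∑ l, lam i • (a i l • ((v l : V) : V)) := by
            apply Finset.sum_congr rfl; intro i _
            apply Finset.sum_congr rfl; intro l _
            rw [smul_assoc, smul_comm]
        _ = ∑ i, lam i • ((w i : V) : V) := by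
            apply Finset.sum_congr rfl; intro i _
            rw [← Finset.smul_sum, ← hwrepr]
        _ = 0 := hc'
    have hcoef : ∀ l, ∑ i, a i l • lam i = 0 :=
      Fintype.linearIndependent_iff.mp hvK _ hsum2
    have ha0 : ∀ i l, a i l = 0 := by
      intro i l
      exact Fintype.linearIndependent_iff.mp hlam_li (fun i => a i l) (hcoef l) i
    have hw0 : ∀ i, w i = 0 := by
      intro i
      have hrepr0 : v.repr (wS i) = 0 := by
        ext l
        exact ha0 i l
      have hwS0 : wS i = 0 := by
        have := v.repr.map_eq_zero_iff.mp hrepr0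
        exact this
      have : ((w i : V) : V) = 0 := congrArg (Submodule.subtype S) hwS0
      exact Subtype.ext this
    rintro ⟨i, j⟩
    have hwi : ∑ j, c (i, j) • b j = 0 := hw0 i
    exact Fintype.linearIndependent_iff.mp b.linearIndependent (fun j => c (i, j)) hwi j
  -- counting: t * k ≤ n * r
  have hcount : t * k ≤ n * r := by
    have h1 := hg.fintype_card_le_finrank
    rwa [Fintype.card_prod, Fintype.card_fin, Fintype.card_fin, hdimV] at h1
  -- conclude
  by_cases hcase : h + 1 ≤ n
  · right
    have htn : t = h + 1 := min_eq_left hcase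
    rw [htn] at hcount
    calc (h + 1) * k ≤ n * r := hcount
      _ = r * n := Nat.mul_comm n r
  · left
    have htn : t = n := min_eq_right (by omega)
    rw [htn] at hcount
    have hkle : k ≤ r := Nat.le_of_mul_le_mul_left hcount (by omega)
    omega
end

section
/- If L_U is h-scattered then L_U is m-scattered for every 1 ≤ m ≤ h. In particular, an h-scattered 𝔽_q-subspace U (i.e., dim_{𝔽_q}(U ∩ W) ≤ h for all h-dimensional 𝔽_{q^n}-subspaces W, and U spans V over 𝔽_{q^n}) satisfies dim_{𝔽_q}(U ∩ W') ≤ m for all m-dimensional 𝔽_{q^n}-subspaces W'. -/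
/-- If `U` is `h`-scattered, then `U` is `m`-scattered for every `1 ≤ m ≤ h`. -/
theorem stmt_9 (q n h : ℕ) (hq : IsPrimePow q) (hh : 1 ≤ h)
    (Fq K V : Type*) [Field Fq] [Field K] [Algebra Fq K]
    [Fintype Fq] [Fintype K]
    (hcard_q : Fintype.card Fq = q) (hcard_K : Fintype.card K = q ^ n)
    [AddCommGroup V] [Module K V] [Module Fq V] [IsScalarTower Fq K V]
    [FiniteDimensional K V] (hhr : h ≤ Module.finrank K V)
    (U : Submodule Fq V)
    (hspan : Submodule.span K (U : Set V) = ⊤)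
    (hscat : ∀ W : Submodule K V, Module.finrank K W = h →
      Module.finrank Fq ↥(U ⊓ W.restrictScalars Fq) ≤ h) :
    ∀ m : ℕ, 1 ≤ m → m ≤ h →
      ∀ W' : Submodule K V, Module.finrank K W' = m →
        Module.finrank Fq ↥(U ⊓ W'.restrictScalars Fq) ≤ m := by
  haveI : Module.Finite Fq K := Module.Finite.of_finite
  haveI : FiniteDimensional Fq V := Module.Finite.trans K V
  -- key claim by downward induction
  have key : ∀ k m : ℕ, m + k = h → ∀ W' : Submodule K V, Module.finrank K W' = m →
      Module.finrank Fq ↥(U ⊓ W'.restrictScalars Fq) ≤ m := by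
    intro k
    induction k with
    | zero =>
      intro m hm W' hW'
      simp only [Nat.add_zero] at hm
      subst hm
      exact hscat W' hW'
    | succ k ih =>
      intro m hm W' hW'
      -- find u ∈ U with u ∉ W'
      have hWne : (W' : Submodule K V) ≠ ⊤ := by
        intro htop
        have h2 : Module.finrank K W' = Module.finrank K V := by
          rw [htop]; exact finrank_top K V
        rw [hW'] at h2
        omega
      have hex : ∃ u, u ∈ U ∧ u ∉ W' := by
        by_contra hcon
        push_neg at hcon
        apply hWne
        have hle' : Submodule.span K (U : Set V) ≤ W' :=
          Submodule.span_le.mpr (fun x hx => hcon x hx)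
        rw [hspan] at hle'
        exact le_antisymm le_top hle'
      obtain ⟨u, huU, huW⟩ := hex
      have hune : u ≠ 0 := by
        intro h0; exact huW (h0 ▸ W'.zero_mem)
      -- W = W' ⊔ K ∙ u
      set W : Submodule K V := W' ⊔ (K ∙ u) with hWdef
      have hdisj : Disjoint W' (K ∙ u) :=
        (Submodule.disjoint_span_singleton' hune).mpr huW
      have hrankW : Module.finrank K W = m + 1 := by
        have h1 : Module.finrank K (K ∙ u) = 1 := finrank_span_singleton hune
        have := Submodule.finrank_sup_add_finrank_inf_eq W' (K ∙ u)
        rw [hdisj.eq_bot] at this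
        simp [finrank_bot] at this
        rw [hWdef, this, hW', h1]
      have hle : Module.finrank Fq ↥(U ⊓ W.restrictScalars Fq) ≤ m + 1 := by
        apply ih (m + 1) (by omega) W hrankW
      -- lower bound
      have hPle : (U ⊓ W'.restrictScalars Fq) ⊔ (Fq ∙ u) ≤ U ⊓ W.restrictScalars Fq := by
        apply sup_le
        · exact inf_le_inf le_rfl (by
            intro x hx
            exact Submodule.mem_sup_left hx)
        · rw [Submodule.span_le]
          intro x hx
          simp only [Set.mem_singleton_iff] at hx
          subst hx
          exact ⟨huU, Submodule.mem_sup_right (Submodule.mem_span_singleton_self _)⟩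
      have hdisj2 : Disjoint (U ⊓ W'.restrictScalars Fq) (Fq ∙ u) :=
        (Submodule.disjoint_span_singleton' hune).mpr (fun hmem => huW hmem.2)
      have hrank2 : Module.finrank Fq ↥((U ⊓ W'.restrictScalars Fq) ⊔ (Fq ∙ u)) =
          Module.finrank Fq ↥(U ⊓ W'.restrictScalars Fq) + 1 := by
        have h1 : Module.finrank Fq (Fq ∙ u) = 1 := finrank_span_singleton hune
        have := Submodule.finrank_sup_add_finrank_inf_eq (U ⊓ W'.restrictScalars Fq) (Fq ∙ u)
        rw [hdisj2.eq_bot] at this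
        simp [finrank_bot] at this
        rw [this, h1]
      have := Submodule.finrank_mono hPle
      rw [hrank2] at this
      omega
  intro m hm1 hmh W' hW'
  exact key (h - m) m (by omega) W' hW'
end

section
/- With Π_x as defined, if x₁,…,x_s ∈ 𝔽_{q^{nt}}^* and y ∈ 𝔽_{q^{nt}}^* are such that Π_y ∩ (Π_{x₁} + ⋯ + Π_{x_s}) ≠ {0}, then Π_y ⊆ Π_{x₁} + ⋯ + Π_{x_s}. -/
/-- The subspace `Π_x` spanned by the coordinate vectors `(0,…,0,f_j(x),0,…,0)`. -/
def PiSubspace (K E : Type*) [Field K] [Field E] [Algebra K E] {h : ℕ}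
    (f : Fin (h + 1) → E → E) (x : E) : Submodule K (Fin (h + 1) → E) :=
  Submodule.span K (Set.range fun j : Fin (h + 1) => Pi.single j (f j x))

/-- If `Π_y` meets `Π_{x₁} + ⋯ + Π_{x_s}` nontrivially, then `Π_y ⊆ Π_{x₁} + ⋯ + Π_{x_s}`. -/
theorem stmt_12 (q n t h s : ℕ) (hq : IsPrimePow q) (hn : 2 ≤ n) (ht : 2 ≤ t) (hh : 1 ≤ h)
    (K E : Type*) [Field K] [Field E] [Algebra K E] [Fintype K] [Fintype E]
    (hcard_K : Fintype.card K = q ^ n) (hcard_E : Fintype.card E = q ^ (n * t))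
    (f : Fin (h + 1) → E → E) (σ : Fin (h + 1) → K ≃+* K)
    (hf0 : f 0 = id)
    (hbij : ∀ j, Function.Bijective (f j))
    (hadd : ∀ j x y, f j (x + y) = f j x + f j y)
    (hsemi : ∀ j (c : K) (x : E), f j (c • x) = σ j c • f j x)
    (x : Fin s → E) (hx : ∀ m, x m ≠ 0) (y : E) (hy : y ≠ 0)
    (hmeet : PiSubspace K E f y ⊓ (⨆ m, PiSubspace K E f (x m)) ≠ ⊥) :
    PiSubspace K E f y ≤ ⨆ m, PiSubspace K E f (x m) := by
  classical
  set S := ⨆ m, PiSubspace K E f (x m) with hS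
  -- `f j` as an additive monoid hom
  set F : Fin (h + 1) → E →+ E := fun j => AddMonoidHom.mk' (f j) (hadd j) with hF
  have hFapp : ∀ j z, F j z = f j z := fun j z => rfl
  -- a nonzero element in the intersection
  obtain ⟨v, hvmem, hvne⟩ := (Submodule.ne_bot_iff _).mp hmeet
  have hvy : v ∈ PiSubspace K E f y := hvmem.1
  have hvS : v ∈ S := hvmem.2
  -- describe membership in Π_y
  rw [PiSubspace, Submodule.mem_span_range_iff_exists_fun] at hvy
  obtain ⟨c, hc⟩ := hvy
  have hcv : ∀ k, v k = c k • f k y := by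
    intro k
    rw [← hc, Finset.sum_apply]
    rw [Finset.sum_eq_single k]
    · simp
    · intro b _ hb
      simp [Pi.single_apply, hb]
    · simp
  -- find a nonzero coordinate
  obtain ⟨j₀, hj₀⟩ : ∃ j₀, v j₀ ≠ 0 := by
    by_contra hcon
    push_neg at hcon
    exact hvne (funext hcon)
  have hcj₀ : c j₀ ≠ 0 := by
    intro h0
    apply hj₀
    rw [hcv j₀, h0, zero_smul]
  -- projection of S to coordinate j₀
  set W : Submodule K E := Submodule.span K (Set.range fun m => f j₀ (x m)) with hW
  have hproj : Submodule.map (LinearMap.proj j₀ : (Fin (h + 1) → E) →ₗ[K] E) S ≤ W := by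
    rw [hS, Submodule.map_iSup]
    apply iSup_le
    intro m
    rw [PiSubspace, Submodule.map_span]
    apply Submodule.span_le.mpr
    rintro _ ⟨_, ⟨j, rfl⟩, rfl⟩
    by_cases hj : j = j₀
    · subst hj
      simp only [LinearMap.proj_apply, Pi.single_eq_same]
      exact Submodule.subset_span ⟨m, rfl⟩
    · simp only [LinearMap.proj_apply, Pi.single_apply, if_neg (Ne.symm hj)]
      exact W.zero_mem
  have hvj₀W : v j₀ ∈ W := hproj ⟨v, hvS, rfl⟩
  have hfy : f j₀ y ∈ W := by
    have := W.smul_mem (c j₀)⁻¹ hvj₀W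
    rwa [hcv j₀, ← smul_assoc, smul_eq_mul, inv_mul_cancel₀ hcj₀, one_smul] at this
  -- deduce y ∈ span of the x's
  have hyU : y ∈ Submodule.span K (Set.range x) := by
    rw [hW, Submodule.mem_span_range_iff_exists_fun] at hfy
    obtain ⟨d, hd⟩ := hfy
    have key : f j₀ (∑ m, (σ j₀).symm (d m) • x m) = f j₀ y := by
      rw [← hFapp, map_sum]
      rw [← hd]
      congr 1
      funext m
      rw [hFapp, hsemi, RingEquiv.apply_symm_apply]
    have : (∑ m, (σ j₀).symm (d m) • x m) = y := (hbij j₀).injective key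
    rw [Submodule.mem_span_range_iff_exists_fun]
    exact ⟨_, this⟩
  -- conclude Π_y ≤ S
  rw [Submodule.mem_span_range_iff_exists_fun] at hyU
  obtain ⟨d, hd⟩ := hyU
  rw [PiSubspace]
  apply Submodule.span_le.mpr
  rintro _ ⟨j, rfl⟩
  have hfj : f j y = ∑ m, σ j (d m) • f j (x m) := by
    rw [← hd, ← hFapp, map_sum]
    congr 1
    funext m
    rw [hFapp, hsemi]
  have key : Pi.single j (f j y) =
      ∑ m, σ j (d m) • (Pi.single j (f j (x m)) : Fin (h + 1) → E) := by
    funext k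
    by_cases hk : k = j
    · subst hk
      simp [hfj, Finset.sum_apply]
    · simp [Finset.sum_apply, Pi.single_apply, hk]
  show Pi.single j (f j y) ∈ (S : Set (Fin (h + 1) → E))
  rw [key]
  apply Submodule.sum_mem
  intro m _
  apply Submodule.smul_mem
  exact le_iSup (fun m => PiSubspace K E f (x m)) m
    (Submodule.subset_span ⟨j, rfl⟩)
end

section
/- Let f₁ = id, f₂,…,f_{h+1} : 𝔽_{q^{nt}} → 𝔽_{q^{nt}} be invertible 𝔽_{q^n}-semilinear maps with pairwise distinct companion automorphisms. Set U = {(x, f₂(x), …, f_{h+1}(x)) : x ∈ 𝔽_{q^{nt}}} and W_x = Π_x as the span of the coordinate vectors of x. Then for every x ∈ 𝔽_{q^{nt}}^*, U ∩ W_x = {(λ x, σ₂(λ) f₂(x), …, σ_{h+1}(λ) f_{h+1}(x)) : λ ∈ 𝔽_{q^n}}, and dim_{𝔽_q}(U ∩ W_x) = n. -/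
/-- For every `x ≠ 0`,
`U ∩ W_x = {(λx, σ₂(λ)f₂(x), …, σ_{h+1}(λ)f_{h+1}(x)) : λ ∈ 𝔽_{q^n}}`, a set of
`𝔽_q`-dimension `n` (i.e. of cardinality `q^n`). -/
theorem stmt_13 (q n t h : ℕ) (hq : IsPrimePow q) (hn : 2 ≤ n) (ht : 2 ≤ t) (hh : 1 ≤ h)
    (K E : Type*) [Field K] [Field E] [Algebra K E] [Fintype K] [Fintype E]
    (hcard_K : Fintype.card K = q ^ n) (hcard_E : Fintype.card E = q ^ (n * t))
    (f : Fin (h + 1) → E → E) (σ : Fin (h + 1) → K ≃+* K)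
    (hf0 : f 0 = id) (hσ0 : σ 0 = RingEquiv.refl K)
    (hbij : ∀ j, Function.Bijective (f j))
    (hadd : ∀ j x y, f j (x + y) = f j x + f j y)
    (hsemi : ∀ j (c : K) (x : E), f j (c • x) = σ j c • f j x)
    (hdist : Function.Injective σ)
    (x : E) (hx : x ≠ 0) :
    (Set.range (fun y : E => fun j => f j y) ∩ (PiSubspace K E f x : Set (Fin (h + 1) → E)))
        = Set.range (fun c : K => fun j => σ j c • f j x) ∧
    Nat.card ↥(Set.range (fun y : E => fun j => f j y) ∩
        (PiSubspace K E f x : Set (Fin (h + 1) → E))) = q ^ n := by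
  have hset : (Set.range (fun y : E => fun j => f j y) ∩
      (PiSubspace K E f x : Set (Fin (h + 1) → E)))
        = Set.range (fun c : K => fun j => σ j c • f j x) := by
    ext v
    constructor
    · rintro ⟨⟨y, rfl⟩, hv⟩
      rw [PiSubspace, SetLike.mem_coe, Submodule.mem_span_range_iff_exists_fun K] at hv
      obtain ⟨c, hc⟩ := hv
      have h0 : y = c 0 • x := by
        have := congrFun hc 0
        simpa [Finset.sum_apply, Pi.single_apply, hf0] using this.symm
      exact ⟨c 0, by funext j; rw [h0]; exact (hsemi j (c 0) x).symm⟩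
    · rintro ⟨c, rfl⟩
      refine ⟨⟨c • x, by funext j; exact hsemi j c x⟩, ?_⟩
      rw [PiSubspace, SetLike.mem_coe, Submodule.mem_span_range_iff_exists_fun K]
      refine ⟨fun j => σ j c, ?_⟩
      funext i
      simp [Finset.sum_apply, Pi.single_apply]
  refine ⟨hset, ?_⟩
  rw [hset]
  have hinj : Function.Injective (fun c : K => fun j => σ j c • f j x) := by
    intro a b hab
    have := congrFun hab 0
    simp only [hσ0, hf0, RingEquiv.refl_apply, id] at this
    have hsub : (a - b) • x = 0 := by rw [sub_smul, this, sub_self]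
    rcases smul_eq_zero.mp hsub with h | h
    · exact sub_eq_zero.mp h
    · exact absurd h hx
  rw [Nat.card_range_of_injective hinj, Nat.card_eq_fintype_card, hcard_K]
end

section
/- Let σ₂,…,σ_{h+1} be pairwise distinct nontrivial elements of Gal(𝔽_{q^n}/𝔽_q), and suppose the exponents I = {0, i₂, …, i_{h+1}} (where σ_j(x) = x^{q^{i_j}}) form a Moore exponent set for q and n. Then U = {(x, f₂(x), …, f_{h+1}(x)) : x ∈ 𝔽_{q^{nt}}} is a maximum h-scattered 𝔽_q-subspace of V = 𝔽_{q^{nt}}^{h+1} (viewed over 𝔽_{q^n}): dim_{𝔽_q} U = nt = dim_{𝔽_{q^n}} V · n/(h+1), U spans V over 𝔽_{q^n}, and dim_{𝔽_q}(U ∩ W) ≤ h for every 𝔽_{q^n}-subspace W of V of dimension h. -/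
open Module

section Helpers

variable {Fq K : Type*} [Field Fq] [Field K] [Algebra Fq K]

/-- Extend a linearly independent family by `d` more vectors. -/
lemma extend_li (d : ℕ) {m : ℕ} (v : Fin m → K) (hv : LinearIndependent Fq v)
    (hd : m + d ≤ Module.finrank Fq K) :
    ∃ w : Fin (m + d) → K, LinearIndependent Fq w ∧ ∀ r, w (Fin.castAdd d r) = v r := by
  induction d with
  | zero => exact ⟨v, hv, fun r => rfl⟩
  | succ d ih =>
    obtain ⟨w, hw, hwv⟩ := ih (by omega)
    have hne : Submodule.span Fq (Set.range w) ≠ ⊤ := by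
      intro htop
      have hb : Module.finrank Fq K = Fintype.card (Fin (m + d)) :=
        Module.finrank_eq_card_basis (Basis.mk hw htop.ge)
      simp at hb
      omega
    obtain ⟨x, hx⟩ : ∃ x, x ∉ Submodule.span Fq (Set.range w) := by
      by_contra hc
      push_neg at hc
      exact hne (Submodule.eq_top_iff'.2 hc)
    refine ⟨Fin.snoc w x, linearIndependent_fin_snoc.2 ⟨hw, hx⟩, fun r => ?_⟩
    have heq : (Fin.castAdd (d + 1) r : Fin (m + (d + 1))) =
        Fin.castSucc (Fin.castAdd d r) := rfl
    rw [heq, Fin.snoc_castSucc, hwv]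

end Helpers

section BM

variable {Fq K : Type*} [Field Fq] [Field K] [Algebra Fq K] [FiniteDimensional Fq K]

lemma base_moore {h : ℕ} (σ : Fin (h + 1) → K ≃ₐ[Fq] K)
    (hMLI : ∀ A : Fin (h + 1) → K, LinearIndependent Fq A →
      LinearIndependent K (fun r (c : Fin (h + 1)) => σ c (A r)))
    (hfr : h + 1 ≤ Module.finrank Fq K)
    (W : Submodule K (Fin (h + 1) → K)) (hW : Module.finrank K W ≤ h) :
    Module.finrank Fq
      ((W.restrictScalars Fq).comap (LinearMap.pi fun j => (σ j).toLinearMap))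
      ≤ Module.finrank K W := by
  set X := (W.restrictScalars Fq).comap (LinearMap.pi fun j => (σ j).toLinearMap) with hX
  by_contra hc
  push_neg at hc
  set k := Module.finrank K W with hk
  obtain ⟨v, hv⟩ := exists_linearIndependent_of_le_finrank (R := Fq) (M := X) hc
  have hv' : LinearIndependent Fq (fun r => (v r : K)) :=
    hv.map' X.subtype (Submodule.ker_subtype _)
  obtain ⟨w, hw, hwv⟩ := extend_li (h - k) (fun r => (v r : K)) hv' (by omega)
  have hcast : (k + 1) + (h - k) = h + 1 := by omega
  set w' : Fin (h + 1) → K := w ∘ (Fin.cast hcast.symm) with hw'def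
  have hw'li : LinearIndependent Fq w' := hw.comp _ (Fin.cast_injective _)
  have hKli := hMLI w' hw'li
  set e : Fin (k + 1) → Fin (h + 1) := fun r => Fin.cast hcast (Fin.castAdd (h - k) r) with he
  have heinj : Function.Injective e := by
    intro a b hab
    simpa [he, Fin.ext_iff] using hab
  have hwe : ∀ r, w' (e r) = (v r : K) := by
    intro r
    have : (Fin.cast hcast.symm) (e r) = Fin.castAdd (h - k) r := rfl
    rw [hw'def]
    simp only [Function.comp_apply, this, hwv]
  have hmem : ∀ r : Fin (k + 1), (fun c => σ c ((v r : K))) ∈ W := by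
    intro r
    exact (v r).2
  set vW : Fin (k + 1) → ↥W := fun r => ⟨fun c => σ c ((v r : K)), hmem r⟩ with hvW
  have hvWli : LinearIndependent K vW := by
    apply LinearIndependent.of_comp W.subtype
    have : (W.subtype ∘ vW) = (fun r (c : Fin (h + 1)) => σ c (w' r)) ∘ e := by
      funext r
      simp [hvW, hwe r]
    rw [this]
    exact hKli.comp e heinj
  have hcard := hvWli.fintype_card_le_finrank
  simp only [Fintype.card_fin] at hcard
  omega

end BM

section MI

variable {Fq K : Type*} [Field Fq] [Field K] [Algebra Fq K] [FiniteDimensional Fq K]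

lemma main_ind {h : ℕ} (σ : Fin (h + 1) → K ≃ₐ[Fq] K)
    (hMLI : ∀ A : Fin (h + 1) → K, LinearIndependent Fq A →
      LinearIndependent K (fun r (c : Fin (h + 1)) => σ c (A r)))
    (hfr : h + 1 ≤ Module.finrank Fq K) :
    ∀ (m : ℕ) (W : Submodule K (Fin (h + 1) → Fin m → K)), Module.finrank K W ≤ h →
      Module.finrank Fq ((W.restrictScalars Fq).comap
        (LinearMap.pi fun j => LinearMap.pi fun s => (σ j).toLinearMap ∘ₗ LinearMap.proj s))
        ≤ Module.finrank K W := by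
  intro m
  induction m with
  | zero =>
    intro W hW
    calc Module.finrank Fq ((W.restrictScalars Fq).comap _)
        ≤ Module.finrank Fq (Fin 0 → K) := Submodule.finrank_le _
      _ = 0 := finrank_zero_of_subsingleton
      _ ≤ Module.finrank K W := Nat.zero_le _
  | succ m ih =>
    intro W hW
    set πlast : (Fin (h + 1) → Fin (m + 1) → K) →ₗ[K] (Fin (h + 1) → K) :=
      LinearMap.pi (fun j => LinearMap.proj (Fin.last m) ∘ₗ LinearMap.proj j) with hπlast
    set πinit : (Fin (h + 1) → Fin (m + 1) → K) →ₗ[K] (Fin (h + 1) → Fin m → K) :=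
      LinearMap.pi (fun j => (LinearMap.funLeft K K Fin.castSucc) ∘ₗ LinearMap.proj j) with hπinit
    set Wl := W.map πlast with hWl
    set Wk := W ⊓ LinearMap.ker πlast with hWk
    set W' := Wk.map πinit with hW'
    set M1 := (LinearMap.pi fun j => LinearMap.pi fun s =>
      (σ j).toLinearMap ∘ₗ LinearMap.proj (R := Fq) (φ := fun _ : Fin (m+1) => K) s) with hM1
    set X := (W.restrictScalars Fq).comap M1 with hXdef
    set ψ : ↥X →ₗ[Fq] K := (LinearMap.proj (Fin.last m)) ∘ₗ X.subtype with hψ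
    -- range bound
    have hWlh : Module.finrank K Wl ≤ h := le_trans (Submodule.finrank_map_le πlast W) hW
    have hrange : LinearMap.range ψ ≤
        (Wl.restrictScalars Fq).comap (LinearMap.pi fun j => (σ j).toLinearMap) := by
      rintro _ ⟨x, rfl⟩
      have hx : M1 (x : Fin (m + 1) → K) ∈ W := x.2
      exact Submodule.mem_comap.2 ((Submodule.mem_map (f := πlast)).2
        ⟨M1 (x : Fin (m + 1) → K), hx, rfl⟩)
    have hr1 : Module.finrank Fq (LinearMap.range ψ) ≤ Module.finrank K Wl :=
      le_trans (Submodule.finrank_mono hrange) (base_moore σ hMLI hfr Wl hWlh)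
    -- kernel bound
    have hW'le : Module.finrank K W' ≤ Module.finrank K Wk := Submodule.finrank_map_le πinit Wk
    have hWkle : Module.finrank K Wk ≤ Module.finrank K W := Submodule.finrank_mono inf_le_left
    set X' := (W'.restrictScalars Fq).comap (LinearMap.pi fun j => LinearMap.pi fun s =>
      (σ j).toLinearMap ∘ₗ LinearMap.proj (R := Fq) (φ := fun _ : Fin m => K) s) with hX'def
    set ρ : ↥(LinearMap.ker ψ) →ₗ[Fq] (Fin m → K) :=
      (LinearMap.funLeft Fq K Fin.castSucc) ∘ₗ X.subtype ∘ₗ (LinearMap.ker ψ).subtype with hρ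
    have hmem' : ∀ z : ↥(LinearMap.ker ψ), ρ z ∈ X' := by
      intro z
      have hu : M1 ((z : ↥X) : Fin (m + 1) → K) ∈ W := (z : ↥X).2
      have hlast : ((z : ↥X) : Fin (m + 1) → K) (Fin.last m) = 0 := z.2
      have hker : M1 ((z : ↥X) : Fin (m + 1) → K) ∈ LinearMap.ker πlast := by
        refine LinearMap.mem_ker.2 ?_
        funext j
        show σ j (((z : ↥X) : Fin (m + 1) → K) (Fin.last m)) = 0
        rw [hlast, map_zero]
      exact Submodule.mem_comap.2 ((Submodule.mem_map (f := πinit)).2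
        ⟨M1 ((z : ↥X) : Fin (m + 1) → K), ⟨hu, hker⟩, rfl⟩)
    set θ : ↥(LinearMap.ker ψ) →ₗ[Fq] ↥X' := LinearMap.codRestrict X' ρ hmem' with hθ
    have hθinj : Function.Injective θ := by
      intro a b hab
      have hab' : ρ a = ρ b := congrArg Subtype.val hab
      have ha0 : ψ (a : ↥X) = 0 := a.2
      have hb0 : ψ (b : ↥X) = 0 := b.2
      have hl : ((a : ↥X) : Fin (m+1) → K) (Fin.last m) = ((b : ↥X) : Fin (m+1) → K) (Fin.last m) :=
        ha0.trans hb0.symm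
      apply Subtype.ext; apply Subtype.ext
      funext idx
      refine Fin.lastCases ?_ ?_ idx
      · exact hl
      · intro s
        exact congrFun hab' s
    have hk1 : Module.finrank Fq (LinearMap.ker ψ) ≤ Module.finrank K W' :=
      le_trans (LinearMap.finrank_le_finrank_of_injective hθinj) (ih W' (le_trans (le_trans hW'le hWkle) hW))
    -- rank-nullity over K for W
    have hsplit : Module.finrank K Wl + Module.finrank K Wk ≤ Module.finrank K W := by
      set φ : ↥W →ₗ[K] (Fin (h + 1) → K) := πlast ∘ₗ W.subtype with hφ
      have h1 : LinearMap.range φ = Wl := by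
        rw [hφ, LinearMap.range_comp, Submodule.range_subtype]
      have h2 : Module.finrank K Wk ≤ Module.finrank K (LinearMap.ker φ) := by
        have hincl : ∀ c : ↥Wk, (Submodule.inclusion (inf_le_left : Wk ≤ W)) c ∈ LinearMap.ker φ := by
          intro c
          refine LinearMap.mem_ker.2 ?_
          exact LinearMap.mem_ker.1 c.2.2
        have hinj : Function.Injective
            (LinearMap.codRestrict (LinearMap.ker φ) (Submodule.inclusion inf_le_left) hincl) := by
          intro a b hab
          have := congrArg Subtype.val (congrArg Subtype.val hab)
          exact Subtype.ext this
        exact LinearMap.finrank_le_finrank_of_injective hinj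
      have h3 := LinearMap.finrank_range_add_finrank_ker φ
      rw [h1] at h3
      omega
    have hrn := LinearMap.finrank_range_add_finrank_ker ψ
    calc Module.finrank Fq X
        = Module.finrank Fq (LinearMap.range ψ) + Module.finrank Fq (LinearMap.ker ψ) := hrn.symm
      _ ≤ Module.finrank K Wl + Module.finrank K W' := Nat.add_le_add hr1 hk1
      _ ≤ Module.finrank K Wl + Module.finrank K Wk := Nat.add_le_add_left hW'le _
      _ ≤ Module.finrank K W := hsplit

end MI


/-- If the exponents `I = {0, i₂, …, i_{h+1}}` of the companion automorphisms form a Moore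
exponent set for `q` and `n`, then `U = {(x, f₂(x), …, f_{h+1}(x)) : x ∈ 𝔽_{q^{nt}}}` is a
maximum `h`-scattered `𝔽_q`-subspace of `V = 𝔽_{q^{nt}}^{h+1}`: it has `𝔽_q`-dimension `nt`
(i.e. cardinality `q^{nt}`), spans `V` over `𝔽_{q^n}`, and meets every `h`-dimensional
`𝔽_{q^n}`-subspace `W` of `V` in an `𝔽_q`-subspace of dimension at most `h`
(i.e. of cardinality at most `q^h`). -/
theorem stmt_14 (q n t h : ℕ) (hq : IsPrimePow q) (hn : 2 ≤ n) (ht : 2 ≤ t) (hh : 1 ≤ h)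
    (hnh : h + 1 ≤ n)
    (Fq K E : Type*) [Field Fq] [Field K] [Field E] [Algebra Fq K] [Algebra K E]
    [Fintype Fq] [Fintype K] [Fintype E]
    (hcard_q : Fintype.card Fq = q) (hcard_K : Fintype.card K = q ^ n)
    (hcard_E : Fintype.card E = q ^ (n * t))
    (f : Fin (h + 1) → E → E) (σ : Fin (h + 1) → K ≃ₐ[Fq] K)
    (i : Fin (h + 1) → ℕ) (hi0 : i 0 = 0) (hilt : ∀ j, i j < n)
    (hiinj : Function.Injective i)
    (hσ : ∀ j (c : K), σ j c = c ^ q ^ i j)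
    (hf0 : f 0 = id)
    (hbij : ∀ j, Function.Bijective (f j))
    (hadd : ∀ j x y, f j (x + y) = f j x + f j y)
    (hsemi : ∀ j (c : K) (x : E), f j (c • x) = σ j c • f j x)
    (hMoore : ∀ A : Fin (h + 1) → K,
      (Matrix.of fun r c => A r ^ q ^ i c : Matrix (Fin (h + 1)) (Fin (h + 1)) K).det = 0 ↔
        ¬ LinearIndependent Fq A) :
    Nat.card ↥(Set.range (fun x : E => fun j => f j x)) = q ^ (n * t) ∧
    Submodule.span K (Set.range (fun x : E => fun j => f j x)) = ⊤ ∧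
    ∀ W : Submodule K (Fin (h + 1) → E), Module.finrank K W = h →
      Nat.card ↥(Set.range (fun x : E => fun j => f j x) ∩ (W : Set (Fin (h + 1) → E)))
        ≤ q ^ h := by
  have hq2 : 2 ≤ q := hq.two_le
  set g : E → (Fin (h + 1) → E) := fun x => fun j => f j x with hg
  -- bundled additive maps
  set F : Fin (h + 1) → (E →+ E) := fun j => AddMonoidHom.mk' (f j) (hadd j) with hF
  have hginj : Function.Injective g := by
    intro a b hab
    have := congrFun hab 0
    simp only [hg, hf0] at this
    exact this
  -- finrank of K over Fq
  have hfrK : Module.finrank Fq K = n := by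
    have hc : Fintype.card K = Fintype.card Fq ^ Module.finrank Fq K := card_eq_pow_finrank
    rw [hcard_K, hcard_q] at hc
    exact (Nat.pow_right_injective hq2 hc.symm)
  -- Moore linear independence transfer
  have hMLI : ∀ A : Fin (h + 1) → K, LinearIndependent Fq A →
      LinearIndependent K (fun r (c : Fin (h + 1)) => σ c (A r)) := by
    intro A hA
    have hdet : IsUnit (Matrix.of fun r c => A r ^ q ^ i c :
        Matrix (Fin (h + 1)) (Fin (h + 1)) K).det := by
      refine isUnit_iff_ne_zero.2 (fun hd => ?_)
      exact (hMoore A).1 hd hA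
    have := Matrix.linearIndependent_rows_iff_isUnit.2 ((Matrix.isUnit_iff_isUnit_det _).2 hdet)
    have heq : (fun r (c : Fin (h + 1)) => σ c (A r)) =
        (fun r => (Matrix.of fun r c => A r ^ q ^ i c :
          Matrix (Fin (h + 1)) (Fin (h + 1)) K) r) := by
      funext r c
      simp [hσ]
    rw [heq]
    exact this
  refine ⟨?_, ?_, ?_⟩
  · -- cardinality of range
    have h1 : Nat.card ↥(Set.range g) = Nat.card E :=
      (Nat.card_congr (Equiv.ofInjective g hginj)).symm
    rw [h1, Nat.card_eq_fintype_card, hcard_E]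
  · -- span
    let bK := Module.finBasis Fq K
    set α : Fin (h + 1) → K := fun r => bK (Fin.castLE (hnh.trans_eq hfrK.symm) r) with hα
    have hαli : LinearIndependent Fq α :=
      bK.linearIndependent.comp _ (Fin.castLE_injective _)
    set M : Matrix (Fin (h + 1)) (Fin (h + 1)) K := Matrix.of fun r c => α r ^ q ^ i c with hM
    have hdet : IsUnit M.det := by
      refine isUnit_iff_ne_zero.2 (fun hd => ?_)
      exact (hMoore α).1 hd hαli
    have hdetT : IsUnit M.transpose.det := by rwa [Matrix.det_transpose]
    have key : ∀ j0 : Fin (h + 1), ∃ u : Fin (h + 1) → K,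
        ∀ j, (∑ r, u r * σ j (α r)) = if j = j0 then 1 else 0 := by
      intro j0
      refine ⟨Matrix.mulVec M.transpose⁻¹ (Pi.single j0 1), fun j => ?_⟩
      have hmv : Matrix.mulVec M.transpose (Matrix.mulVec M.transpose⁻¹ (Pi.single j0 1))
          = Pi.single j0 1 := by
        rw [Matrix.mulVec_mulVec, Matrix.mul_nonsing_inv _ hdetT, Matrix.one_mulVec]
      calc (∑ r, Matrix.mulVec M.transpose⁻¹ (Pi.single j0 1) r * σ j (α r))
          = (Matrix.mulVec M.transpose (Matrix.mulVec M.transpose⁻¹ (Pi.single j0 1))) j := by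
            simp only [Matrix.mulVec, dotProduct, Matrix.transpose_apply, hM,
              Matrix.of_apply]
            refine Finset.sum_congr rfl (fun r _ => ?_)
            rw [hσ, mul_comm]
        _ = (Pi.single j0 1 : Fin (h + 1) → K) j := congrFun hmv j
        _ = if j = j0 then 1 else 0 := by simp [Pi.single_apply]
    rw [eq_top_iff]
    rintro v -
    have hv : v = ∑ j, Pi.single j (v j) := (Finset.univ_sum_single v).symm
    rw [hv]
    refine Submodule.sum_mem _ (fun j _ => ?_)
    obtain ⟨x, hx⟩ := (hbij j).2 (v j)
    obtain ⟨u, hu⟩ := key j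
    have hsingle : Pi.single j (v j) = ∑ r, u r • g (α r • x) := by
      funext j'
      rw [Finset.sum_apply]
      have hterm : ∀ r : Fin (h + 1), (u r • g (α r • x)) j' = (u r * σ j' (α r)) • f j' x := by
        intro r
        simp only [Pi.smul_apply, hg]
        rw [hsemi, smul_smul]
      rw [Finset.sum_congr rfl (fun r _ => hterm r), ← Finset.sum_smul, hu j']
      by_cases hjj : j' = j
      · subst hjj
        simp [hx]
      · simp [Pi.single_apply, hjj, Ne.symm hjj]
    rw [hsingle]
    exact Submodule.sum_mem _ (fun r _ =>
      Submodule.smul_mem _ _ (Submodule.subset_span ⟨α r • x, rfl⟩))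
  · -- scattered property
    intro W hWr
    set ι := Fin (Module.finrank K E) with hι
    set bE := Module.finBasis K E with hbE
    -- the images of the basis under f j form bases
    have hyli : ∀ j, LinearIndependent K (fun s : ι => f j (bE s)) := by
      intro j
      rw [Fintype.linearIndependent_iff]
      intro c hc s
      have hzero : f j (∑ s : ι, (σ j).symm (c s) • bE s) = 0 := by
        rw [show f j (∑ s : ι, (σ j).symm (c s) • bE s)
            = ∑ s : ι, f j ((σ j).symm (c s) • bE s) from map_sum (F j) _ _]
        rw [← hc]
        refine Finset.sum_congr rfl (fun s _ => ?_)
        rw [hsemi, AlgEquiv.apply_symm_apply]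
      have hz0 : f j (0 : E) = 0 := map_zero (F j)
      have := (hbij j).1 (hzero.trans hz0.symm)
      have hcs := Fintype.linearIndependent_iff.1 bE.linearIndependent _ this s
      have : c s = σ j ((σ j).symm (c s)) := (AlgEquiv.apply_symm_apply _ _).symm
      rw [this, hcs, map_zero]
    have hyspan : ∀ j, ⊤ ≤ Submodule.span K (Set.range fun s : ι => f j (bE s)) := by
      intro j z _
      obtain ⟨x, rfl⟩ := (hbij j).2 z
      have hxs : x = ∑ s : ι, bE.equivFun x s • bE s := (bE.sum_equivFun x).symm
      rw [hxs, show f j (∑ s : ι, bE.equivFun x s • bE s)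
          = ∑ s : ι, f j (bE.equivFun x s • bE s) from map_sum (F j) _ _]
      refine Submodule.sum_mem _ (fun s _ => ?_)
      rw [hsemi]
      exact Submodule.smul_mem _ _ (Submodule.subset_span ⟨s, rfl⟩)
    set bj : (j : Fin (h + 1)) → Basis ι K E := fun j => Basis.mk (hyli j) (hyspan j) with hbj
    set Φ : (Fin (h + 1) → E) ≃ₗ[K] (Fin (h + 1) → ι → K) :=
      LinearEquiv.piCongrRight (fun j => (bj j).equivFun) with hΦ
    set Mt : (ι → K) →ₗ[Fq] (Fin (h + 1) → ι → K) :=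
      LinearMap.pi fun j => LinearMap.pi fun s =>
        (σ j).toLinearMap ∘ₗ LinearMap.proj (R := Fq) (φ := fun _ : ι => K) s with hMt
    have hΦg : ∀ x : E, Φ (g x) = Mt (bE.equivFun x) := by
      intro x
      funext j
      have hfx : f j x = ∑ s : ι, σ j (bE.equivFun x s) • (bj j) s := by
        conv_lhs => rw [show x = ∑ s : ι, bE.equivFun x s • bE s from (bE.sum_equivFun x).symm]
        rw [show f j (∑ s : ι, bE.equivFun x s • bE s)
            = ∑ s : ι, f j (bE.equivFun x s • bE s) from map_sum (F j) _ _]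
        refine Finset.sum_congr rfl (fun s _ => ?_)
        rw [hsemi, hbj, Basis.mk_apply]
      have : Φ (g x) j = (bj j).equivFun (f j x) := rfl
      rw [this, hfx, show (∑ s : ι, σ j (bE.equivFun x s) • (bj j) s)
          = (bj j).equivFun.symm (fun s => σ j (bE.equivFun x s)) from
          ((bj j).equivFun_symm_apply _).symm, LinearEquiv.apply_symm_apply]
      rfl
    set Wm := W.map Φ.toLinearMap with hWm
    have hWmfr : Module.finrank K Wm = h := by
      rw [hWm, LinearEquiv.finrank_map_eq]
      exact hWr
    set Xm := (Wm.restrictScalars Fq).comap Mt with hXm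
    have hXmfr : Module.finrank Fq Xm ≤ h := by
      have := main_ind σ hMLI (hnh.trans_eq hfrK.symm) (Module.finrank K E) Wm (le_of_eq hWmfr)
      rw [hWmfr] at this
      exact this
    -- set equalities
    have hseteq : Set.range g ∩ (W : Set (Fin (h + 1) → E)) = g '' {x : E | g x ∈ W} := by
      ext v
      constructor
      · rintro ⟨⟨x, rfl⟩, hvW⟩
        exact ⟨x, hvW, rfl⟩
      · rintro ⟨x, hx, rfl⟩
        exact ⟨⟨x, rfl⟩, hx⟩
    have hset2 : (⇑bE.equivFun '' {x : E | g x ∈ W}) = (Xm : Set (ι → K)) := by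
      ext a
      constructor
      · rintro ⟨x, hx, rfl⟩
        refine (Submodule.mem_comap (f := Mt)).2 ?_
        refine (Submodule.mem_map (f := Φ.toLinearMap)).2 ⟨g x, hx, ?_⟩
        exact (hΦg x)
      · intro ha
        obtain ⟨w, hw, hww⟩ := (Submodule.mem_map (f := Φ.toLinearMap)).1
          ((Submodule.mem_comap (f := Mt)).1 ha)
        set x := bE.equivFun.symm a with hxdef
        have hax : bE.equivFun x = a := bE.equivFun.apply_symm_apply a
        have hgx : g x = w := Φ.injective (by rw [hΦg x, hax]; exact hww.symm)
        exact ⟨x, by rw [Set.mem_setOf_eq, hgx]; exact hw, hax⟩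
    have hcard1 : Nat.card ↥(Set.range g ∩ (W : Set (Fin (h + 1) → E)))
        = Nat.card ↥{x : E | g x ∈ W} := by
      rw [hseteq, Nat.card_coe_set_eq, Nat.card_coe_set_eq,
        Set.ncard_image_of_injective _ hginj]
    have hcard2 : Nat.card ↥{x : E | g x ∈ W} = Nat.card ↥Xm := by
      rw [Nat.card_coe_set_eq, show (Nat.card ↥Xm) = (Xm : Set (ι → K)).ncard from
        Nat.card_coe_set_eq _, ← hset2,
        Set.ncard_image_of_injective _ bE.equivFun.injective]
    have hcard3 : Nat.card ↥Xm = q ^ Module.finrank Fq Xm := by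
      haveI : Fintype ↥Xm := Fintype.ofFinite _
      rw [Nat.card_eq_fintype_card, card_eq_pow_finrank (K := Fq), hcard_q]
    rw [hcard1, hcard2, hcard3]
    exact Nat.pow_le_pow_right (by omega) hXmfr
end

section
/- Let L = L_U be a maximum h-scattered 𝔽_q-linear set of h-pseudoregulus type in PG((h+1)t-1, q^n) with n > h+1, with h-pseudoregulus 𝒫. Then for every h-dimensional projective subspace π of PG((h+1)t-1, q^n) not in 𝒫, the weight of π in L satisfies w_L(π) ≤ hn/(h+1) + 1 < n. In particular the h-pseudoregulus of L is unique. -/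
open Module Submodule


section Aux

variable {Fq K V : Type*} [Field Fq] [Field K] [Algebra Fq K]
  [AddCommGroup V] [Module K V] [Module Fq V] [IsScalarTower Fq K V]

/-- identity equivalence between a restricted-scalars submodule and the submodule itself. -/
def restrictEquiv (p : Submodule K V) : ↥(p.restrictScalars Fq) ≃ₗ[Fq] ↥p where
  toFun := fun x => ⟨x.1, x.2⟩
  invFun := fun x => ⟨x.1, x.2⟩
  left_inv := fun _ => rfl
  right_inv := fun _ => rfl
  map_add' := fun _ _ => rfl
  map_smul' := fun _ _ => rfl

lemma finrank_restrict (p : Submodule K V) [FiniteDimensional Fq V] :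
    Module.finrank Fq ↥(p.restrictScalars Fq) = Module.finrank Fq K * Module.finrank K ↥p := by
  rw [LinearEquiv.finrank_eq (restrictEquiv (Fq := Fq) p)]
  exact (Module.finrank_mul_finrank Fq K ↥p).symm

/-- In an `h`-scattered situation, the weight of a subspace of dimension at most `h`
is at most its dimension. -/
lemma aux_wt_le [FiniteDimensional K V] [FiniteDimensional Fq V] (h : ℕ)
    (hdim : h < Module.finrank K V)
    (U : Submodule Fq V) (hspan : Submodule.span K (U : Set V) = ⊤)
    (hscat : ∀ W : Submodule K V, Module.finrank K W = h →
      Module.finrank Fq ↥(U ⊓ W.restrictScalars Fq) ≤ h) :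
    ∀ (W : Submodule K V), Module.finrank K W ≤ h →
      Module.finrank Fq ↥(U ⊓ W.restrictScalars Fq) ≤ Module.finrank K W := by
  suffices H : ∀ (j : ℕ) (W : Submodule K V), Module.finrank K W + j = h →
      Module.finrank Fq ↥(U ⊓ W.restrictScalars Fq) ≤ Module.finrank K W by
    intro W hW
    exact H (h - Module.finrank K W) W (by omega)
  intro j
  induction j with
  | zero =>
    intro W hW
    have := hscat W (by omega)
    omega
  | succ j ih =>
    intro W hW
    -- find u ∈ U with u ∉ W
    have hWtop : ¬ ((U : Set V) ⊆ (W : Set V)) := by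
      intro hsub
      have h1 : (⊤ : Submodule K V) ≤ W := by
        rw [← hspan]; exact Submodule.span_le.mpr hsub
      have h2 : W = ⊤ := top_le_iff.mp h1
      rw [h2, finrank_top] at hW
      omega
    obtain ⟨u, huU, huW⟩ := Set.not_subset.mp hWtop
    have hu0 : u ≠ 0 := fun e => huW (by rw [e]; exact W.zero_mem)
    set W' := W ⊔ Submodule.span K {u} with hW'
    have hWKu : W ⊓ Submodule.span K {u} = ⊥ := by
      rw [eq_bot_iff]
      rintro x ⟨hxW, hxu⟩
      obtain ⟨c, rfl⟩ := Submodule.mem_span_singleton.mp hxu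
      rcases eq_or_ne c 0 with rfl | hc
      · simpa using Submodule.zero_mem _
      · exfalso
        apply huW
        have : c⁻¹ • (c • u) ∈ W := W.smul_mem _ hxW
        rwa [smul_smul, inv_mul_cancel₀ hc, one_smul] at this
    have hfrW' : Module.finrank K W' = Module.finrank K W + 1 := by
      have := Submodule.finrank_sup_add_finrank_inf_eq W (Submodule.span K {u})
      rw [hWKu, finrank_bot, finrank_span_singleton hu0, ← hW'] at this
      omega
    have huW' : u ∈ W' := le_sup_right (α := Submodule K V)
      (Submodule.mem_span_singleton_self u)
    -- weight grows
    set A := U ⊓ W.restrictScalars Fq with hA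
    set A' := U ⊓ W'.restrictScalars Fq with hA'
    have hsu : Submodule.span Fq {u} ≤ A' := by
      rw [Submodule.span_le, Set.singleton_subset_iff]
      exact ⟨huU, huW'⟩
    have hAA' : A ≤ A' := inf_le_inf_left U (by
      intro x hx
      exact (le_sup_left : W ≤ W') hx)
    have hAu : A ⊓ Submodule.span Fq {u} = ⊥ := by
      rw [eq_bot_iff]
      rintro x ⟨hxA, hxu⟩
      obtain ⟨c, rfl⟩ := Submodule.mem_span_singleton.mp hxu
      rcases eq_or_ne c 0 with rfl | hc
      · simpa using Submodule.zero_mem _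
      · exfalso
        apply huW
        have hxW : (c • u) ∈ W.restrictScalars Fq := hxA.2
        have : c⁻¹ • (c • u) ∈ W.restrictScalars Fq :=
          Submodule.smul_mem _ _ hxW
        rwa [smul_smul, inv_mul_cancel₀ hc, one_smul] at this
    have hfr : Module.finrank Fq ↥(A ⊔ Submodule.span Fq {u}) = Module.finrank Fq ↥A + 1 := by
      have := Submodule.finrank_sup_add_finrank_inf_eq A (Submodule.span Fq {u})
      rw [hAu, finrank_bot, finrank_span_singleton hu0] at this
      omega
    have hle : A ⊔ Submodule.span Fq {u} ≤ A' := sup_le hAA' hsu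
    have h1 : Module.finrank Fq ↥A + 1 ≤ Module.finrank Fq ↥A' := by
      rw [← hfr]
      exact Submodule.finrank_mono hle
    have h2 : Module.finrank Fq ↥A' ≤ Module.finrank K W' := ih W' (by omega)
    omega

/-- Key lemma: under the scatteredness assumption, vectors of `U` cannot satisfy a
nontrivial `K`-linear relation whose coefficients are `𝔽_q`-independent (for at most
`h+1` coefficients). -/
lemma keyA [FiniteDimensional K V] [FiniteDimensional Fq V] (h : ℕ)
    (hdim : h < Module.finrank K V)
    (U : Submodule Fq V) (hspan : Submodule.span K (U : Set V) = ⊤)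
    (hscat : ∀ W : Submodule K V, Module.finrank K W = h →
      Module.finrank Fq ↥(U ⊓ W.restrictScalars Fq) ≤ h) :
    ∀ (p : ℕ), p ≤ h + 1 → ∀ lam : Fin p → K, LinearIndependent Fq lam →
      ∀ v : Fin p → V, (∀ i, v i ∈ U) → (∑ i, lam i • v i) = 0 → ∀ i, v i = 0 := by
  intro p
  induction p with
  | zero => intro _ lam _ v _ _ i; exact i.elim0
  | succ p ih =>
    intro hp lam hlam v hv hsum
    by_cases hind : LinearIndependent Fq v
    · exfalso
      -- the span of `v ∘ Fin.succ` has dimension ≤ p but contains p+1 independent vectors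
      classical
      set W := Submodule.span K (Set.range (v ∘ Fin.succ)) with hW
      have hWp : Module.finrank K W ≤ p := by
        refine (finrank_span_le_card _).trans ?_
        rw [Set.toFinset_range]
        exact (Finset.card_image_le).trans (by simp)
      have hlam0 : lam 0 ≠ 0 := hlam.ne_zero 0
      have hvW : ∀ i, v i ∈ W := by
        have hsucc : ∀ i : Fin p, v i.succ ∈ W := fun i =>
          Submodule.subset_span ⟨i, rfl⟩
        intro i
        refine Fin.cases ?_ (fun i => hsucc i) i
        have h0 : lam 0 • v 0 = -∑ i : Fin p, lam i.succ • v i.succ := by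
          rw [Fin.sum_univ_succ] at hsum
          exact eq_neg_of_add_eq_zero_left hsum
        have hmem : lam 0 • v 0 ∈ W := by
          rw [h0]
          exact neg_mem (Submodule.sum_mem _ fun i _ => W.smul_mem _ (hsucc i))
        have := W.smul_mem (lam 0)⁻¹ hmem
        rwa [smul_smul, inv_mul_cancel₀ hlam0, one_smul] at this
      -- p+1 independent vectors in U ⊓ W
      set A := U ⊓ W.restrictScalars Fq with hA
      have hmemA : ∀ i, v i ∈ A := fun i => ⟨hv i, hvW i⟩
      let w : Fin (p + 1) → ↥A := fun i => ⟨v i, hmemA i⟩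
      have hwind : LinearIndependent Fq w := by
        apply LinearIndependent.of_comp A.subtype
        exact hind
      have hcard : p + 1 ≤ Module.finrank Fq ↥A := by
        simpa using hwind.fintype_card_le_finrank
      have hwt : Module.finrank Fq ↥A ≤ Module.finrank K W :=
        aux_wt_le h hdim U hspan hscat W (by omega)
      omega
    · -- extract an 𝔽_q-dependence and eliminate one vector
      classical
      obtain ⟨μ, hμsum, j, hμj⟩ := Fintype.not_linearIndependent_iff.mp hind
      set Λ : Fin (p + 1) → K :=
        fun i => lam i - algebraMap Fq K (μ i * (μ j)⁻¹) * lam j with hΛ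
      have hΛj : Λ j = 0 := by
        simp only [hΛ, mul_inv_cancel₀ hμj, map_one, one_mul, sub_self]
      have hterm : ∀ i, Λ i • v i = lam i • v i - lam j • ((μ j)⁻¹ • (μ i • v i)) := by
        intro i
        rw [hΛ, sub_smul]
        congr 1
        rw [mul_smul, algebraMap_smul, smul_comm, mul_comm, mul_smul]
      have hΛsum : ∑ i, Λ i • v i = 0 := by
        simp only [hterm]
        rw [Finset.sum_sub_distrib, ← Finset.smul_sum, ← Finset.smul_sum, hsum, hμsum]
        simp
      have hΛsum' : ∑ i : Fin p, Λ (j.succAbove i) • v (j.succAbove i) = 0 := by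
        have := Fin.sum_univ_succAbove (fun i => Λ i • v i) j
        rw [hΛsum, hΛj, zero_smul, zero_add] at this
        exact this.symm
      -- the new coefficients are 𝔽_q-independent
      have hΛind : LinearIndependent Fq (fun i : Fin p => Λ (j.succAbove i)) := by
        rw [Fintype.linearIndependent_iff]
        intro g hg
        set G : Fin (p + 1) → Fq :=
          j.insertNth (-(∑ i, g i * (μ (j.succAbove i) * (μ j)⁻¹))) g with hG
        have hGsum : ∑ i, G i • lam i = 0 := by
          rw [Fin.sum_univ_succAbove (fun i => G i • lam i) j]
          simp only [hG, Fin.insertNth_apply_same, Fin.insertNth_apply_succAbove]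
          have hgi : ∀ i : Fin p, g i • Λ (j.succAbove i)
              = g i • lam (j.succAbove i)
                - (g i * (μ (j.succAbove i) * (μ j)⁻¹)) • lam j := by
            intro i
            rw [hΛ, smul_sub]
            congr 1
            simp only [Algebra.smul_def, map_mul, map_inv₀]
            ring
          have := hg
          simp only [hgi] at this
          rw [Finset.sum_sub_distrib, ← Finset.sum_smul] at this
          rw [neg_smul, add_comm, ← sub_eq_add_neg]
          exact this
        have := Fintype.linearIndependent_iff.mp hlam G hGsum
        intro i
        have := this (j.succAbove i)
        rwa [hG, Fin.insertNth_apply_succAbove] at this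
      -- apply the induction hypothesis
      have hall : ∀ i : Fin p, v (j.succAbove i) = 0 :=
        ih (by omega) _ hΛind _ (fun i => hv _) hΛsum'
      have hvj : v j = 0 := by
        have := Fin.sum_univ_succAbove (fun i => lam i • v i) j
        rw [hsum] at this
        simp only [hall, smul_zero, Finset.sum_const_zero, add_zero] at this
        have hlamj : lam j ≠ 0 := hlam.ne_zero j
        have := this.symm
        exact (smul_eq_zero.mp this).resolve_left hlamj
      intro i
      rcases eq_or_ne i j with rfl | hne
      · exact hvj
      · obtain ⟨z, rfl⟩ := Fin.exists_succAbove_eq hne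
        exact hall z

/-- The rank bound: for every `K`-subspace `S`,
`(h+1) * dim_Fq (U ⊓ S) ≤ dim_Fq K * dim_K S`. -/
lemma aux_bound [FiniteDimensional K V] [FiniteDimensional Fq V] [FiniteDimensional Fq K] (h : ℕ)
    (hdim : h < Module.finrank K V) (hnh : h + 1 ≤ Module.finrank Fq K)
    (U : Submodule Fq V) (hspan : Submodule.span K (U : Set V) = ⊤)
    (hscat : ∀ W : Submodule K V, Module.finrank K W = h →
      Module.finrank Fq ↥(U ⊓ W.restrictScalars Fq) ≤ h)
    (S : Submodule K V) :
    (h + 1) * Module.finrank Fq ↥(U ⊓ S.restrictScalars Fq)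
      ≤ Module.finrank Fq K * Module.finrank K S := by
  classical
  set A := U ⊓ S.restrictScalars Fq with hA
  set w := Module.finrank Fq ↥A with hw
  -- an 𝔽_q-independent family of h+1 elements of K
  let bK := Module.finBasis Fq K
  let lam : Fin (h + 1) → K := fun i => bK (Fin.castLE hnh i)
  have hlam : LinearIndependent Fq lam :=
    bK.linearIndependent.comp _ (Fin.castLE_injective hnh)
  -- a basis of A
  let bA := Module.finBasis Fq ↥A
  have hbAU : ∀ k : Fin w, (bA k : V) ∈ U := fun k => (bA k).2.1
  have hbAS : ∀ k : Fin w, (bA k : V) ∈ S.restrictScalars Fq := fun k => (bA k).2.2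
  -- the family  λ_i • a_k  is 𝔽_q-independent inside S
  let F : Fin (h + 1) × Fin w → ↥(S.restrictScalars Fq) :=
    fun x => ⟨lam x.1 • (bA x.2 : V), by
      have : (bA x.2 : V) ∈ S := hbAS x.2
      exact S.smul_mem _ this⟩
  have hFind : LinearIndependent Fq F := by
    apply LinearIndependent.of_comp (S.restrictScalars Fq).subtype
    rw [Fintype.linearIndependent_iff]
    intro g hg
    have hrw : ∑ x : Fin (h + 1) × Fin w,
        g x • ((S.restrictScalars Fq).subtype ∘ F) x
        = ∑ i : Fin (h + 1), lam i • (∑ k : Fin w, g (i, k) • (bA k : V)) := by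
      rw [Fintype.sum_prod_type]
      refine Finset.sum_congr rfl fun i _ => ?_
      rw [Finset.smul_sum]
      refine Finset.sum_congr rfl fun k _ => ?_
      show g (i, k) • (lam i • (bA k : V)) = lam i • (g (i, k) • (bA k : V))
      rw [smul_comm]
    rw [hrw] at hg
    set v : Fin (h + 1) → V := fun i => ∑ k : Fin w, g (i, k) • (bA k : V) with hv
    have hvU : ∀ i, v i ∈ U := fun i =>
      Submodule.sum_mem _ fun k _ => U.smul_mem _ (hbAU k)
    have hvz : ∀ i, v i = 0 :=
      keyA h hdim U hspan hscat (h + 1) le_rfl lam hlam v hvU hg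
    intro x
    have hvx := hvz x.1
    have : (∑ k : Fin w, g (x.1, k) • bA k : ↥A) = 0 := by
      apply Subtype.ext
      push_cast
      exact hvx
    have hcoords := Fintype.linearIndependent_iff.mp bA.linearIndependent _ this
    have := hcoords x.2
    simpa using this
  have hcard := hFind.fintype_card_le_finrank
  rw [Fintype.card_prod, Fintype.card_fin, Fintype.card_fin] at hcard
  calc (h + 1) * w ≤ Module.finrank Fq ↥(S.restrictScalars Fq) := hcard
    _ = Module.finrank Fq K * Module.finrank K S := finrank_restrict S

/-- Counting: the members of the pseudoregulus cover all nonzero vectors of `U`. -/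
lemma aux_cover [Fintype Fq] [Fintype K] [Finite V] (q n t : ℕ) (hq2 : 2 ≤ q)
    (hn1 : 1 ≤ n) (hcard_q : Fintype.card Fq = q)
    (U : Submodule Fq V) (hrank : Module.finrank Fq U = n * t)
    (P : Set (Submodule K V))
    (hPcard : P.ncard = (q ^ (n * t) - 1) / (q ^ n - 1))
    (hPdisj : ∀ π ∈ P, ∀ π' ∈ P, π ≠ π' → π ⊓ π' = ⊥)
    (hPwt : ∀ π ∈ P, Module.finrank Fq ↥(U ⊓ π.restrictScalars Fq) = n)
    {u : V} (hu : u ∈ U) (hu0 : u ≠ 0) : ∃ π ∈ P, u ∈ π := by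
  classical
  haveI : Fintype V := Fintype.ofFinite V
  have cardsub : ∀ A : Submodule Fq V,
      Fintype.card ↥A = q ^ (Module.finrank Fq ↥A) := fun A => by
    rw [card_eq_pow_finrank (K := Fq), hcard_q]
  have hdvd : (q ^ n - 1) ∣ (q ^ (n * t) - 1) := by
    have := Nat.sub_dvd_pow_sub_pow (q ^ n) 1 t
    rwa [one_pow, ← pow_mul] at this
  have hfinP : P.Finite := by
    haveI : Finite (Submodule K V) :=
      Finite.of_injective (fun p => (p : Set V)) SetLike.coe_injective
    exact Set.toFinite P
  set Pf := hfinP.toFinset with hPf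
  set D : Submodule K V → Finset V :=
    fun π => ((U ⊓ π.restrictScalars Fq : Submodule Fq V) : Set V).toFinset.erase 0 with hD
  have hDcard : ∀ π ∈ Pf, (D π).card = q ^ n - 1 := by
    intro π hπ
    have hπP : π ∈ P := hfinP.mem_toFinset.mp hπ
    rw [hD]
    rw [Finset.card_erase_of_mem (by
      rw [Set.mem_toFinset]; exact Submodule.zero_mem _)]
    rw [Set.toFinset_card]
    have : Fintype.card ↥((U ⊓ π.restrictScalars Fq : Submodule Fq V) : Set V)
        = Fintype.card ↥(U ⊓ π.restrictScalars Fq : Submodule Fq V) := rfl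
    rw [this, cardsub, hPwt π hπP]
  have hdisj : ∀ π ∈ Pf, ∀ π' ∈ Pf, π ≠ π' → Disjoint (D π) (D π') := by
    intro π hπ π' hπ' hne
    rw [Finset.disjoint_left]
    intro x hx hx'
    rw [hD, Finset.mem_erase, Set.mem_toFinset] at hx hx'
    have hx0 : x ≠ 0 := hx.1
    have : x ∈ π ⊓ π' := ⟨hx.2.2, hx'.2.2⟩
    rw [hPdisj π (hfinP.mem_toFinset.mp hπ) π' (hfinP.mem_toFinset.mp hπ') hne] at this
    exact hx0 this
  set Bf := (U : Set V).toFinset.erase 0 with hBf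
  have hBfcard : Bf.card = q ^ (n * t) - 1 := by
    rw [hBf, Finset.card_erase_of_mem (by
      rw [Set.mem_toFinset]; exact Submodule.zero_mem _), Set.toFinset_card]
    have : Fintype.card ↥((U : Set V)) = Fintype.card ↥U := rfl
    rw [this, cardsub, hrank]
  have hsub : Pf.biUnion D ⊆ Bf := by
    intro x hx
    obtain ⟨π, hπ, hxD⟩ := Finset.mem_biUnion.mp hx
    rw [hD, Finset.mem_erase, Set.mem_toFinset] at hxD
    rw [hBf, Finset.mem_erase, Set.mem_toFinset]
    exact ⟨hxD.1, hxD.2.1⟩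
  have hcardU : (Pf.biUnion D).card = q ^ (n * t) - 1 := by
    rw [Finset.card_biUnion hdisj]
    rw [Finset.sum_congr rfl hDcard, Finset.sum_const, smul_eq_mul]
    have hPfcard : Pf.card = (q ^ (n * t) - 1) / (q ^ n - 1) := by
      rw [← hPcard, hPf, Set.ncard_eq_toFinset_card P hfinP]
    rw [hPfcard, Nat.div_mul_cancel hdvd]
  have heq : Pf.biUnion D = Bf :=
    Finset.eq_of_subset_of_card_le hsub (by rw [hBfcard, hcardU])
  have huB : u ∈ Bf := by
    rw [hBf, Finset.mem_erase, Set.mem_toFinset]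
    exact ⟨hu0, hu⟩
  rw [← heq] at huB
  obtain ⟨π, hπ, hπD⟩ := Finset.mem_biUnion.mp huB
  refine ⟨π, hfinP.mem_toFinset.mp hπ, ?_⟩
  rw [hD, Finset.mem_erase, Set.mem_toFinset] at hπD
  exact hπD.2.2

end Aux

set_option maxHeartbeats 1000000


/-- `P` is an `h`-pseudoregulus associated with the linear set defined by the `𝔽_q`-subspace
`U` of the `𝔽_{q^n}`-vector space `V` (with `dim_{𝔽_{q^n}} V = (h+1)t`): a family of
`(q^{nt}-1)/(q^n-1)` pairwise disjoint `h`-dimensional projective subspaces (i.e.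
`(h+1)`-dimensional `𝔽_{q^n}`-subspaces), each of weight `n`, admitting exactly `h+1`
transversal `(t-1)`-subspaces as in the definition of linear sets of `h`-pseudoregulus
type. -/
def IsHPseudoregulus (q n t h : ℕ) (Fq K V : Type*) [Field Fq] [Field K] [Algebra Fq K]
    [AddCommGroup V] [Module K V] [Module Fq V] [IsScalarTower Fq K V]
    (U : Submodule Fq V) (P : Set (Submodule K V)) : Prop :=
  P.ncard = (q ^ (n * t) - 1) / (q ^ n - 1) ∧
  (∀ π ∈ P, Module.finrank K π = h + 1) ∧
  (∀ π ∈ P, ∀ π' ∈ P, π ≠ π' → π ⊓ π' = ⊥) ∧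
  (∀ π ∈ P, Module.finrank Fq ↥(U ⊓ π.restrictScalars Fq) = n) ∧
  ∃ T : Fin (h + 1) → Submodule K V,
    Function.Injective T ∧
    (∀ j, Module.finrank K (T j) = t) ∧
    (⨆ j, T j) = ⊤ ∧
    (∀ j, ∀ π ∈ P, T j ⊓ π ≠ ⊥) ∧
    (∀ j₀ : Fin (h + 1),
      U ⊓ (Submodule.restrictScalars Fq (⨆ j ∈ ({j₀}ᶜ : Set (Fin (h + 1))), T j)) = ⊥) ∧
    (∀ T' : Submodule K V, Module.finrank K T' = t →
      (∀ π ∈ P, T' ⊓ π ≠ ⊥) → ∃ j, T' = T j)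

/-- Let `L = L_U` be a maximum `h`-scattered `𝔽_q`-linear set of `h`-pseudoregulus type in
`PG((h+1)t - 1, q^n)` with `n > h+1` and `h`-pseudoregulus `𝒫`. Then every `h`-dimensional
projective subspace `π ∉ 𝒫` has weight `w_L(π) ≤ hn/(h+1) + 1 < n` (the first inequality
stated as `(h+1)·w_L(π) ≤ hn + (h+1)`); in particular the `h`-pseudoregulus of `L` is
unique. -/
theorem stmt_16 (q n t h : ℕ) (hq : IsPrimePow q) (ht : 2 ≤ t) (hh : 1 ≤ h)
    (hn : h + 1 < n)
    (Fq K V : Type*) [Field Fq] [Field K] [Algebra Fq K]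
    [Fintype Fq] [Fintype K]
    (hcard_q : Fintype.card Fq = q) (hcard_K : Fintype.card K = q ^ n)
    [AddCommGroup V] [Module K V] [Module Fq V] [IsScalarTower Fq K V]
    [FiniteDimensional K V] (hdimV : Module.finrank K V = (h + 1) * t)
    (U : Submodule Fq V) (hrank : Module.finrank Fq U = n * t)
    (hspan : Submodule.span K (U : Set V) = ⊤)
    (hscat : ∀ W : Submodule K V, Module.finrank K W = h →
      Module.finrank Fq ↥(U ⊓ W.restrictScalars Fq) ≤ h)
    (P : Set (Submodule K V)) (hP : IsHPseudoregulus q n t h Fq K V U P) :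
    (∀ π : Submodule K V, Module.finrank K π = h + 1 → π ∉ P →
      (h + 1) * Module.finrank Fq ↥(U ⊓ π.restrictScalars Fq) ≤ h * n + (h + 1) ∧
      Module.finrank Fq ↥(U ⊓ π.restrictScalars Fq) < n) ∧
    ∀ P' : Set (Submodule K V), IsHPseudoregulus q n t h Fq K V U P' → P' = P := by
  classical
  obtain ⟨hPcard, hPdim, hPdisj, hPwt, -⟩ := hP
  haveI : Module.Finite Fq V := Module.Finite.trans K V
  haveI : Finite V := Module.finite_of_finite K
  have hq2 : 2 ≤ q := hq.two_le
  have hfrk : Module.finrank Fq K = n := by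
    have h1 := card_eq_pow_finrank (K := Fq) (V := K)
    rw [hcard_K, hcard_q] at h1
    exact (Nat.pow_right_injective hq2 h1).symm
  have hdimlt : h < Module.finrank K V := by
    rw [hdimV]
    have : (h + 1) * 2 ≤ (h + 1) * t := Nat.mul_le_mul_left _ ht
    omega
  have main : ∀ π : Submodule K V, Module.finrank K π = h + 1 → π ∉ P →
      (h + 1) * Module.finrank Fq ↥(U ⊓ π.restrictScalars Fq) ≤ h * n + (h + 1) ∧
      Module.finrank Fq ↥(U ⊓ π.restrictScalars Fq) < n := by
    intro π hπdim hπP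
    set w := Module.finrank Fq ↥(U ⊓ π.restrictScalars Fq) with hwdef
    rcases Nat.eq_zero_or_pos w with hw0 | hw1
    · constructor
      · rw [hw0, Nat.mul_zero]; omega
      · omega
    · have hne : U ⊓ π.restrictScalars Fq ≠ ⊥ := by
        intro e
        rw [hwdef, e, finrank_bot] at hw1
        omega
      obtain ⟨u, huA, hu0⟩ := Submodule.exists_mem_ne_zero_of_ne_bot hne
      obtain ⟨huU, huπ⟩ := Submodule.mem_inf.mp huA
      obtain ⟨Pi, hPiP, huPi⟩ := aux_cover q n t hq2 (by omega) hcard_q U hrank P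
        hPcard hPdisj hPwt huU hu0
      set k := Module.finrank K ↥(Pi ⊓ π) with hkdef
      have hinfne : Pi ⊓ π ≠ ⊥ := by
        intro e
        have : u ∈ (⊥ : Submodule K V) := e ▸ Submodule.mem_inf.mpr ⟨huPi, huπ⟩
        exact hu0 ((Submodule.mem_bot K).mp this)
      have hk1 : 1 ≤ k :=
        Nat.pos_of_ne_zero (fun h0 => hinfne (Submodule.finrank_eq_zero.mp h0))
      have hkle1 : k ≤ h + 1 := by
        have := Submodule.finrank_mono (inf_le_left : Pi ⊓ π ≤ Pi)
        rw [hPdim Pi hPiP] at this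
        exact this
      have hkle : k ≤ h := by
        rcases Nat.lt_or_ge k (h + 1) with hlt | hge
        · omega
        · exfalso
          have hkeq : k = h + 1 := by omega
          have h2 : Pi ⊓ π = Pi := Submodule.eq_of_le_of_finrank_le inf_le_left
            (by rw [hPdim Pi hPiP, ← hkdef, hkeq])
          have h3 : Pi ≤ π := h2 ▸ inf_le_right
          have h4 : Pi = π := Submodule.eq_of_le_of_finrank_le h3
            (by rw [hPdim Pi hPiP, hπdim])
          exact hπP (h4 ▸ hPiP)
      set d := Module.finrank K ↥(Pi ⊔ π) with hddef
      have hdk : d + k = (h + 1) + (h + 1) := by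
        have := Submodule.finrank_sup_add_finrank_inf_eq Pi π
        rw [hPdim Pi hPiP, hπdim] at this
        omega
      set c := Module.finrank Fq ↥(U ⊓ (Pi ⊓ π).restrictScalars Fq) with hcdef
      have hck : c ≤ k :=
        (aux_wt_le h hdimlt U hspan hscat (Pi ⊓ π) (by omega)).trans_eq rfl
      have hA12 : (U ⊓ Pi.restrictScalars Fq) ⊓ (U ⊓ π.restrictScalars Fq)
          = U ⊓ (Pi ⊓ π).restrictScalars Fq := by
        ext x
        simp only [Submodule.mem_inf, Submodule.restrictScalars_mem]
        tauto
      have hgrass := Submodule.finrank_sup_add_finrank_inf_eq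
        (U ⊓ Pi.restrictScalars Fq) (U ⊓ π.restrictScalars Fq)
      rw [hA12, hPwt Pi hPiP] at hgrass
      have hle : (U ⊓ Pi.restrictScalars Fq) ⊔ (U ⊓ π.restrictScalars Fq)
          ≤ U ⊓ (Pi ⊔ π).restrictScalars Fq := by
        refine sup_le (inf_le_inf_left U ?_) (inf_le_inf_left U ?_)
        · intro x hx; exact (le_sup_left : Pi ≤ Pi ⊔ π) hx
        · intro x hx; exact (le_sup_right : π ≤ Pi ⊔ π) hx
      have hmono := Submodule.finrank_mono hle
      set R := Module.finrank Fq ↥(U ⊓ (Pi ⊔ π).restrictScalars Fq) with hRdef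
      have hRlow : n + w ≤ R + c := by omega
      have hkey := aux_bound h hdimlt (by omega) U hspan hscat (Pi ⊔ π)
      rw [hfrk] at hkey
      have hkey' : (h + 1) * R ≤ n * d := by rw [hRdef, hddef]; exact hkey
      clear hkey
      clear_value w k d c R
      -- now: (h+1) * R ≤ n * d
      have goal1 : (h + 1) * w ≤ h * n + (h + 1) := by
        have hk' : k = (k - 1) + 1 := by omega
        set k' := k - 1 with hk'def
        clear_value k'
        have e1 : (h + 1) * (n + w) ≤ (h + 1) * R + (h + 1) * c := by
          rw [← Nat.mul_add]
          exact Nat.mul_le_mul_left _ hRlow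
        have e2 : (h + 1) * c ≤ (h + 1) * k := Nat.mul_le_mul_left _ hck
        have e3 : n * d + n * k = 2 * (n * (h + 1)) := by
          have h5 : d + k = 2 * (h + 1) := by omega
          calc n * d + n * k = n * (d + k) := (Nat.mul_add n d k).symm
            _ = 2 * (n * (h + 1)) := by rw [h5]; ring
        have e5 : n * k = n * k' + n := by rw [hk']; ring
        have e6 : (h + 1) * k = (h + 1) * k' + (h + 1) := by rw [hk']; ring
        have e7 : (h + 1) * k' ≤ n * k' := Nat.mul_le_mul_right _ (by omega)
        have E : (h + 1) * n + (h + 1) * w ≤ n * d + (h + 1) * k := by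
          calc (h + 1) * n + (h + 1) * w = (h + 1) * (n + w) := by ring
            _ ≤ (h + 1) * R + (h + 1) * c := e1
            _ ≤ n * d + (h + 1) * k := Nat.add_le_add hkey' e2
        linarith [E, e3, e5, e6, e7]
      refine ⟨goal1, ?_⟩
      by_contra hwn
      push_neg at hwn
      have h6 := Nat.mul_le_mul_left (h + 1) hwn
      have e9 : (h + 1) * n = h * n + n := by ring
      linarith [goal1, h6, e9]
  refine ⟨main, ?_⟩
  intro P' hP'
  obtain ⟨hP'card, hP'dim, -, hP'wt, -⟩ := hP'
  have hsub : P' ⊆ P := by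
    intro π' hπ'
    by_contra hmem
    have h2 := (main π' (hP'dim π' hπ') hmem).2
    rw [hP'wt π' hπ'] at h2
    exact lt_irrefl n h2
  have hfinP : P.Finite := by
    haveI : Finite (Submodule K V) :=
      Finite.of_injective (fun p => (p : Set V)) SetLike.coe_injective
    exact Set.toFinite P
  exact Set.eq_of_subset_of_ncard_le hsub (by rw [hPcard, hP'card]) hfinP
end

section
/- Projection of a subgeometry is independent of the axis: with S* = V ⊕ H = V̄ ⊕ H (as 𝔽_{q^n}-vector spaces), and U = (S + H) ∩ V, Ū = (S + H) ∩ V̄ for an 𝔽_q-subspace S of S*, there exists an 𝔽_{q^n}-linear isomorphism ω : V → V̄ with ω(U) = Ū; hence the linear sets L_U ⊆ PG(V) and L_{Ū} ⊆ PG(V̄) are projectively equivalent. -/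
/-! Both `V` and `V̄` are identified with `S* ⧸ H`, so the composite `ω` moves each vector only
by an element of `H`. Membership in any additive subgroup containing `H`, such as `S + H`, is
therefore unchanged by `ω`. -/

namespace Submodule

variable {R M : Type*} [Ring R] [AddCommGroup M] [Module R M] {V V' H : Submodule R M}

noncomputable def equivOfIsComplOfIsCompl (hV : IsCompl V H) (hV' : IsCompl V' H) :
    V ≃ₗ[R] V' :=
  (quotientEquivOfIsCompl H V hV.symm).symm.trans (quotientEquivOfIsCompl H V' hV'.symm)

theorem equivOfIsComplOfIsCompl_sub_mem (hV : IsCompl V H) (hV' : IsCompl V' H) (v : V) :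
    (equivOfIsComplOfIsCompl hV hV' v : M) - v ∈ H := by
  rw [← Quotient.eq, equivOfIsComplOfIsCompl, LinearEquiv.trans_apply,
    mk_quotientEquivOfIsCompl_apply, quotientEquivOfIsCompl_symm_apply]

theorem equivOfIsComplOfIsCompl_mem_iff (hV : IsCompl V H) (hV' : IsCompl V' H)
    {T : AddSubgroup M} (hT : (H : Set M) ⊆ T) (v : V) :
    (v : M) ∈ T ↔ (equivOfIsComplOfIsCompl hV hV' v : M) ∈ T := by
  have hsub : (equivOfIsComplOfIsCompl hV hV' v : M) - v ∈ T :=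
    hT (equivOfIsComplOfIsCompl_sub_mem hV hV' v)
  exact ⟨fun hv => by simpa using T.add_mem hsub hv, fun hw => by simpa using T.sub_mem hw hsub⟩

end Submodule

theorem stmt_17_general
    (Fq K S : Type*) [Field Fq] [Field K] [Algebra Fq K]
    [AddCommGroup S] [Module K S] [Module Fq S] [IsScalarTower Fq K S]
    (V V' H : Submodule K S) (h1 : IsCompl V H) (h2 : IsCompl V' H)
    (Ssub : Submodule Fq S) :
    ∃ ω : ↥V ≃ₗ[K] ↥V', ∀ v : ↥V,
      ((v : S) ∈ Ssub ⊔ H.restrictScalars Fq ↔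
        ((ω v : ↥V') : S) ∈ Ssub ⊔ H.restrictScalars Fq) :=
  ⟨Submodule.equivOfIsComplOfIsCompl h1 h2,
    Submodule.equivOfIsComplOfIsCompl_mem_iff h1 h2
      (T := (Ssub ⊔ H.restrictScalars Fq).toAddSubgroup)
      fun _ hx => Submodule.mem_sup_right (S := Ssub) hx⟩

/-- Projection of a subgeometry is independent of the axis: if `S* = V ⊕ H = V̄ ⊕ H` and
`S` is an `𝔽_q`-subspace of `S*`, then there is an `𝔽_{q^n}`-linear isomorphism
`ω : V → V̄` carrying `U = (S + H) ∩ V` onto `Ū = (S + H) ∩ V̄`; hence the linear sets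
`L_U` and `L_Ū` are projectively equivalent. -/
theorem stmt_17 (q n : ℕ) (hq : IsPrimePow q)
    (Fq K S : Type*) [Field Fq] [Field K] [Algebra Fq K]
    [Fintype Fq] [Fintype K]
    (hcard_q : Fintype.card Fq = q) (hcard_K : Fintype.card K = q ^ n)
    [AddCommGroup S] [Module K S] [Module Fq S] [IsScalarTower Fq K S]
    (V V' H : Submodule K S) (h1 : IsCompl V H) (h2 : IsCompl V' H)
    (Ssub : Submodule Fq S) :
    ∃ ω : ↥V ≃ₗ[K] ↥V', ∀ v : ↥V,
      ((v : S) ∈ Ssub ⊔ H.restrictScalars Fq ↔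
        ((ω v : ↥V') : S) ∈ Ssub ⊔ H.restrictScalars Fq) :=
  stmt_17_general Fq K S V V' H h1 h2 Ssub
end
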